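/- arXiv:1612.01913 — 3 statements merged into one kernel-verified Lean document; each statement's English description precedes it below -/
import Mathlib

section
/- Axioms [H_⊓] and [H_⋎] are equivalent. -/
/-- A 'linear' framework for projective 3-space: a set of lines with an
incidence relation, together with the data of the two incidence-equivalence
classes `SigY`, `SigM` on `Σ(a,b)` and the derived points `pt` and planes `pl`. -/
structure LineGeom where
  L : Type
  dag : L → L → Prop
  dag_refl : ∀ l, dag l l
  dag_symm : ∀ {a b}, dag a b → dag b a
  SigY : L → L → Set L
  SigM : L → L → Set L
  pt : L → L → Set L
  pl : L → L → Set L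

namespace LineGeom

variable (G : LineGeom)

/-- `S†` : the lines incident to every line of `S`. -/
def perp (S : Set G.L) : Set G.L := {x | ∀ s ∈ S, G.dag x s}

/-- `Σ(a,b) = [a b] \ [a b]†`. -/
def Sig (a b : G.L) : Set G.L := G.perp {a, b} \ G.perp (G.perp {a, b})

/-- AXIOMS [1]-[4] together with the defining properties of the two classes
`Σ_⋎(a,b)`, `Σ_⊓(a,b)` and of the point `a ⋎ b` and plane `a ⊓ b`. -/
structure Axioms : Prop where
  ax1 : ∀ l : G.L, ∃ x y z, x ∈ G.perp {l} ∧ y ∈ G.perp {l} ∧ z ∈ G.perp {l} ∧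
      ¬ G.dag x y ∧ ¬ G.dag y z ∧ ¬ G.dag x z
  ax21 : ∀ a b : G.L, a ≠ b → G.dag a b →
      ∃ x ∈ G.perp {a, b}, ∃ y ∈ G.perp {a, b}, ¬ G.dag x y
  ax22 : ∀ a b : G.L, a ≠ b → G.dag a b → ∀ c ∈ G.Sig a b,
      ∀ x ∈ G.perp {a, b, c}, ∀ y ∈ G.perp {a, b, c}, G.dag x y
  ax23 : ∀ a b : G.L, a ≠ b → G.dag a b →
      ∀ x ∈ G.perp {a, b}, ∀ y ∈ G.perp {a, b}, ¬ G.dag x y →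
      G.perp {a, b} = G.perp {a, b, x} ∪ G.perp {a, b, y}
  ax3 : ∀ a b : G.L, a ≠ b → G.dag a b → ∀ c ∈ G.Sig a b,
      ∃ p q : G.L, p ≠ q ∧ G.dag p q ∧ ∃ r ∈ G.Sig p q,
        G.perp {a, b, c} ∩ G.perp {p, q, r} = ∅
  sig_union : ∀ a b : G.L, a ≠ b → G.dag a b →
      G.SigY a b ∪ G.SigM a b = G.Sig a b
  sig_disjoint : ∀ a b : G.L, a ≠ b → G.dag a b →
      G.SigY a b ∩ G.SigM a b = ∅
  sigY_nonempty : ∀ a b : G.L, a ≠ b → G.dag a b → (G.SigY a b).Nonempty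
  sigM_nonempty : ∀ a b : G.L, a ≠ b → G.dag a b → (G.SigM a b).Nonempty
  sig_class : ∀ a b : G.L, a ≠ b → G.dag a b → ∀ x ∈ G.Sig a b, ∀ y ∈ G.Sig a b,
      (((x ∈ G.SigY a b ∧ y ∈ G.SigY a b) ∨ (x ∈ G.SigM a b ∧ y ∈ G.SigM a b))
        ↔ G.dag x y)
  sigY_symm : ∀ a b : G.L, G.SigY a b = G.SigY b a
  sigM_symm : ∀ a b : G.L, G.SigM a b = G.SigM b a
  pt_spec : ∀ a b : G.L, a ≠ b → G.dag a b → ∀ c ∈ G.SigY a b,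
      G.pt a b = G.perp {a, b, c}
  pl_spec : ∀ a b : G.L, a ≠ b → G.dag a b → ∀ c ∈ G.SigM a b,
      G.pl a b = G.perp {a, b, c}
  ax4 : ∀ a b p q : G.L, a ≠ b → G.dag a b → p ≠ q → G.dag p q →
      (G.pt a b ∩ G.pt p q).Nonempty ∧ (G.pl a b ∩ G.pl p q).Nonempty

/-- Three pairwise-incident distinct lines forming a triad. -/
def Triad (a b c : G.L) : Prop :=
  a ≠ b ∧ b ≠ c ∧ a ≠ c ∧ G.dag a b ∧ G.dag b c ∧ G.dag a c ∧
  a ∈ G.Sig b c ∧ b ∈ G.Sig c a ∧ c ∈ G.Sig a b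

/-- A `⊓`-triad. -/
def MTriad (a b c : G.L) : Prop :=
  a ≠ b ∧ b ≠ c ∧ a ≠ c ∧ G.dag a b ∧ G.dag b c ∧ G.dag a c ∧
  a ∈ G.SigM b c ∧ b ∈ G.SigM c a ∧ c ∈ G.SigM a b

/-- A `⋎`-triad. -/
def YTriad (a b c : G.L) : Prop :=
  a ≠ b ∧ b ≠ c ∧ a ≠ c ∧ G.dag a b ∧ G.dag b c ∧ G.dag a c ∧
  a ∈ G.SigY b c ∧ b ∈ G.SigY c a ∧ c ∈ G.SigY a b

/-- A `⊓`-tetrad: each of the four included triples is a `⊓`-triad. -/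
def MTetrad (o p q r : G.L) : Prop :=
  G.MTriad p q r ∧ G.MTriad o q r ∧ G.MTriad o r p ∧ G.MTriad o p q

/-- A `⋎`-tetrad. -/
def YTetrad (o p q r : G.L) : Prop :=
  G.YTriad p q r ∧ G.YTriad o q r ∧ G.YTriad o r p ∧ G.YTriad o p q

/-- A point: a set of lines of the form `x ⋎ y`. -/
def IsPoint (X : Set G.L) : Prop := ∃ x y : G.L, x ≠ y ∧ G.dag x y ∧ X = G.pt x y

/-- A plane: a set of lines of the form `x ⊓ y`. -/
def IsPlane (X : Set G.L) : Prop := ∃ x y : G.L, x ≠ y ∧ G.dag x y ∧ X = G.pl x y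

end LineGeom

open LineGeom

/-- Axiom [H_⊓]: the diagonals of every `⊓`-tetrad form a `⊓`-triad. -/
def LineGeom.HM (G : LineGeom) : Prop :=
  ∀ o p q r a b c : G.L, G.MTetrad o p q r →
    G.pt o p ∩ G.pt q r = {a} →
    G.pt o q ∩ G.pt r p = {b} →
    G.pt o r ∩ G.pt p q = {c} →
    G.MTriad a b c

/-- Axiom [H_⋎]: the diagonals of every `⋎`-tetrad form a `⋎`-triad. -/
def LineGeom.HY (G : LineGeom) : Prop :=
  ∀ o p q r a b c : G.L, G.YTetrad o p q r →
    G.pl o p ∩ G.pl q r = {a} →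
    G.pl o q ∩ G.pl r p = {b} →
    G.pl o r ∩ G.pl p q = {c} →
    G.YTriad a b c

namespace LineGeom

variable {G : LineGeom}

lemma mem_perp2 {x a b : G.L} : x ∈ G.perp {a, b} ↔ G.dag x a ∧ G.dag x b := by
  simp [perp]

lemma mem_perp3 {x a b c : G.L} :
    x ∈ G.perp {a, b, c} ↔ G.dag x a ∧ G.dag x b ∧ G.dag x c := by
  simp [perp]

lemma perp3_comm {a b c : G.L} : G.perp {a, b, c} = G.perp {b, a, c} := by
  rw [Set.insert_comm]

lemma Sig_sub_perp {a b : G.L} : G.Sig a b ⊆ G.perp {a, b} := Set.diff_subset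

lemma Sig_symm {a b : G.L} : G.Sig a b = G.Sig b a := by
  unfold Sig; rw [Set.pair_comm]

lemma sigY_sub (hG : G.Axioms) {a b : G.L} (hab : a ≠ b) (hd : G.dag a b) :
    G.SigY a b ⊆ G.Sig a b := by
  rw [← hG.sig_union a b hab hd]; exact Set.subset_union_left

lemma sigM_sub (hG : G.Axioms) {a b : G.L} (hab : a ≠ b) (hd : G.dag a b) :
    G.SigM a b ⊆ G.Sig a b := by
  rw [← hG.sig_union a b hab hd]; exact Set.subset_union_right

/-- L13: a ⋎-line and a ⊓-line of `Σ(a,b)` are never incident. -/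
lemma noYM (hG : G.Axioms) {a b w m : G.L} (hab : a ≠ b) (hd : G.dag a b)
    (hw : w ∈ G.SigY a b) (hm : m ∈ G.SigM a b) : ¬ G.dag w m := by
  intro hdag
  rcases (hG.sig_class a b hab hd w (sigY_sub hG hab hd hw) m
      (sigM_sub hG hab hd hm)).mpr hdag with ⟨_, h2⟩ | ⟨h1, _⟩
  · have : m ∈ G.SigY a b ∩ G.SigM a b := ⟨h2, hm⟩
    rw [hG.sig_disjoint a b hab hd] at this; exact this
  · have : w ∈ G.SigY a b ∩ G.SigM a b := ⟨hw, h1⟩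
    rw [hG.sig_disjoint a b hab hd] at this; exact this

lemma classY (hG : G.Axioms) {a b z w : G.L} (hab : a ≠ b) (hd : G.dag a b)
    (hz : z ∈ G.Sig a b) (hw : w ∈ G.SigY a b) (hdag : G.dag z w) :
    z ∈ G.SigY a b := by
  rcases (hG.sig_class a b hab hd z hz w (sigY_sub hG hab hd hw)).mpr hdag with
    ⟨h1, _⟩ | ⟨_, h2⟩
  · exact h1
  · exact absurd (Set.mem_inter hw h2) (by rw [hG.sig_disjoint a b hab hd]; simp)

lemma classM (hG : G.Axioms) {a b z m : G.L} (hab : a ≠ b) (hd : G.dag a b)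
    (hz : z ∈ G.Sig a b) (hm : m ∈ G.SigM a b) (hdag : G.dag z m) :
    z ∈ G.SigM a b := by
  rcases (hG.sig_class a b hab hd z hz m (sigM_sub hG hab hd hm)).mpr hdag with
    ⟨_, h2⟩ | ⟨h1, _⟩
  · exact absurd (Set.mem_inter h2 hm) (by rw [hG.sig_disjoint a b hab hd]; simp)
  · exact h1

lemma pt_mem_left (hG : G.Axioms) {a b : G.L} (hab : a ≠ b) (hd : G.dag a b) :
    a ∈ G.pt a b := by
  obtain ⟨w, hw⟩ := hG.sigY_nonempty a b hab hd
  rw [hG.pt_spec a b hab hd w hw, mem_perp3]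
  have := (mem_perp2.mp (Sig_sub_perp (sigY_sub hG hab hd hw))).1
  exact ⟨G.dag_refl a, hd, G.dag_symm this⟩

lemma pt_mem_right (hG : G.Axioms) {a b : G.L} (hab : a ≠ b) (hd : G.dag a b) :
    b ∈ G.pt a b := by
  obtain ⟨w, hw⟩ := hG.sigY_nonempty a b hab hd
  rw [hG.pt_spec a b hab hd w hw, mem_perp3]
  have := (mem_perp2.mp (Sig_sub_perp (sigY_sub hG hab hd hw))).2
  exact ⟨G.dag_symm hd, G.dag_refl b, G.dag_symm this⟩

lemma pl_mem_left (hG : G.Axioms) {a b : G.L} (hab : a ≠ b) (hd : G.dag a b) :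
    a ∈ G.pl a b := by
  obtain ⟨w, hw⟩ := hG.sigM_nonempty a b hab hd
  rw [hG.pl_spec a b hab hd w hw, mem_perp3]
  have := (mem_perp2.mp (Sig_sub_perp (sigM_sub hG hab hd hw))).1
  exact ⟨G.dag_refl a, hd, G.dag_symm this⟩

lemma pl_mem_right (hG : G.Axioms) {a b : G.L} (hab : a ≠ b) (hd : G.dag a b) :
    b ∈ G.pl a b := by
  obtain ⟨w, hw⟩ := hG.sigM_nonempty a b hab hd
  rw [hG.pl_spec a b hab hd w hw, mem_perp3]
  have := (mem_perp2.mp (Sig_sub_perp (sigM_sub hG hab hd hw))).2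
  exact ⟨G.dag_symm hd, G.dag_refl b, G.dag_symm this⟩

lemma pt_clique (hG : G.Axioms) {a b x y : G.L} (hab : a ≠ b) (hd : G.dag a b)
    (hx : x ∈ G.pt a b) (hy : y ∈ G.pt a b) : G.dag x y := by
  obtain ⟨w, hw⟩ := hG.sigY_nonempty a b hab hd
  rw [hG.pt_spec a b hab hd w hw] at hx hy
  exact hG.ax22 a b hab hd w (sigY_sub hG hab hd hw) x hx y hy

lemma pl_clique (hG : G.Axioms) {a b x y : G.L} (hab : a ≠ b) (hd : G.dag a b)
    (hx : x ∈ G.pl a b) (hy : y ∈ G.pl a b) : G.dag x y := by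
  obtain ⟨w, hw⟩ := hG.sigM_nonempty a b hab hd
  rw [hG.pl_spec a b hab hd w hw] at hx hy
  exact hG.ax22 a b hab hd w (sigM_sub hG hab hd hw) x hx y hy

lemma pt_symm (hG : G.Axioms) {a b : G.L} (hab : a ≠ b) (hd : G.dag a b) :
    G.pt a b = G.pt b a := by
  obtain ⟨w, hw⟩ := hG.sigY_nonempty a b hab hd
  have hw' : w ∈ G.SigY b a := by rw [← hG.sigY_symm a b]; exact hw
  rw [hG.pt_spec a b hab hd w hw, hG.pt_spec b a hab.symm (G.dag_symm hd) w hw',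
    perp3_comm]

lemma pl_symm (hG : G.Axioms) {a b : G.L} (hab : a ≠ b) (hd : G.dag a b) :
    G.pl a b = G.pl b a := by
  obtain ⟨w, hw⟩ := hG.sigM_nonempty a b hab hd
  have hw' : w ∈ G.SigM b a := by rw [← hG.sigM_symm a b]; exact hw
  rw [hG.pl_spec a b hab hd w hw, hG.pl_spec b a hab.symm (G.dag_symm hd) w hw',
    perp3_comm]

lemma sigY_not_mem_pl (hG : G.Axioms) {a b z : G.L} (hab : a ≠ b) (hd : G.dag a b)
    (hz : z ∈ G.SigY a b) : z ∉ G.pl a b := by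
  intro hmem
  obtain ⟨m, hm⟩ := hG.sigM_nonempty a b hab hd
  rw [hG.pl_spec a b hab hd m hm, mem_perp3] at hmem
  exact noYM hG hab hd hz hm hmem.2.2

lemma sigM_not_mem_pt (hG : G.Axioms) {a b z : G.L} (hab : a ≠ b) (hd : G.dag a b)
    (hz : z ∈ G.SigM a b) : z ∉ G.pt a b := by
  intro hmem
  obtain ⟨w, hw⟩ := hG.sigY_nonempty a b hab hd
  rw [hG.pt_spec a b hab hd w hw, mem_perp3] at hmem
  exact noYM hG hab hd hw hz (G.dag_symm hmem.2.2)

/-- L9: for every point there is a plane missing it. -/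
lemma exists_pl_disjoint_pt (hG : G.Axioms) {x y : G.L} (hxy : x ≠ y)
    (hd : G.dag x y) : ∃ e f : G.L, e ≠ f ∧ G.dag e f ∧ G.pt x y ∩ G.pl e f = ∅ := by
  obtain ⟨c, hc⟩ := hG.sigY_nonempty x y hxy hd
  obtain ⟨p, q, hpq, hdpq, r, hr, hdisj⟩ :=
    hG.ax3 x y hxy hd c (sigY_sub hG hxy hd hc)
  have hr' : r ∈ G.SigY p q ∪ G.SigM p q := by
    rw [hG.sig_union p q hpq hdpq]; exact hr
  rcases hr' with hrY | hrM
  · exfalso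
    obtain ⟨t, ht⟩ := (hG.ax4 x y p q hxy hd hpq hdpq).1
    rw [hG.pt_spec x y hxy hd c hc, hG.pt_spec p q hpq hdpq r hrY] at ht
    rw [Set.eq_empty_iff_forall_notMem] at hdisj
    exact hdisj t ht
  · exact ⟨p, q, hpq, hdpq, by
      rw [hG.pt_spec x y hxy hd c hc, hG.pl_spec p q hpq hdpq r hrM]; exact hdisj⟩

/-- L9': for every plane there is a point missing it. -/
lemma exists_pt_disjoint_pl (hG : G.Axioms) {x y : G.L} (hxy : x ≠ y)
    (hd : G.dag x y) : ∃ e f : G.L, e ≠ f ∧ G.dag e f ∧ G.pl x y ∩ G.pt e f = ∅ := by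
  obtain ⟨c, hc⟩ := hG.sigM_nonempty x y hxy hd
  obtain ⟨p, q, hpq, hdpq, r, hr, hdisj⟩ :=
    hG.ax3 x y hxy hd c (sigM_sub hG hxy hd hc)
  have hr' : r ∈ G.SigY p q ∪ G.SigM p q := by
    rw [hG.sig_union p q hpq hdpq]; exact hr
  rcases hr' with hrY | hrM
  · exact ⟨p, q, hpq, hdpq, by
      rw [hG.pl_spec x y hxy hd c hc, hG.pt_spec p q hpq hdpq r hrY]; exact hdisj⟩
  · exfalso
    obtain ⟨t, ht⟩ := (hG.ax4 x y p q hxy hd hpq hdpq).2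
    rw [hG.pl_spec x y hxy hd c hc, hG.pl_spec p q hpq hdpq r hrM] at ht
    rw [Set.eq_empty_iff_forall_notMem] at hdisj
    exact hdisj t ht

end LineGeom
namespace LineGeom

variable {G : LineGeom}

/-- L11: a plane is determined by any two of its lines. -/
lemma pl_determined (hG : G.Axioms) {u v x y : G.L} (huv : u ≠ v) (hduv : G.dag u v)
    (hx : x ∈ G.pl u v) (hy : y ∈ G.pl u v) (hxy : x ≠ y) :
    G.pl x y = G.pl u v := by
  have hdxy : G.dag x y := pl_clique hG huv hduv hx hy
  obtain ⟨w, hw⟩ := hG.sigM_nonempty x y hxy hdxy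
  -- pl u v ⊆ perp {x, y, w}
  have hsub : G.pl u v ⊆ G.perp {x, y, w} := by
    intro z hz
    rw [mem_perp3]
    refine ⟨pl_clique hG huv hduv hz hx, pl_clique hG huv hduv hz hy, ?_⟩
    by_cases hpp : z ∈ G.perp (G.perp {x, y})
    · exact hpp w (Sig_sub_perp (sigM_sub hG hxy hdxy hw))
    · have hzS : z ∈ G.Sig x y :=
        ⟨mem_perp2.mpr ⟨pl_clique hG huv hduv hz hx, pl_clique hG huv hduv hz hy⟩, hpp⟩
      have hzS' : z ∈ G.SigY x y ∪ G.SigM x y := by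
        rw [hG.sig_union x y hxy hdxy]; exact hzS
      rcases hzS' with hzY | hzM
      · exfalso
        -- pl u v ⊆ pt x y, contradicting plane/point separation
        have hsub2 : G.pl u v ⊆ G.pt x y := by
          rw [hG.pt_spec x y hxy hdxy z hzY]
          intro t ht
          rw [mem_perp3]
          exact ⟨pl_clique hG huv hduv ht hx, pl_clique hG huv hduv ht hy,
            pl_clique hG huv hduv ht hz⟩
        obtain ⟨e, f, hef, hdef, hdisj⟩ := exists_pl_disjoint_pt hG hxy hdxy
        obtain ⟨t, ht1, ht2⟩ := (hG.ax4 u v e f huv hduv hef hdef).2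
        have : t ∈ G.pt x y ∩ G.pl e f := ⟨hsub2 ht1, ht2⟩
        rw [hdisj] at this; exact this
      · exact (hG.sig_class x y hxy hdxy z hzS w
          (sigM_sub hG hxy hdxy hw)).mp (Or.inr ⟨hzM, hw⟩)
  rw [hG.pl_spec x y hxy hdxy w hw]
  apply Set.Subset.antisymm _ hsub
  -- reverse inclusion
  intro t ht
  obtain ⟨m, hm⟩ := hG.sigM_nonempty u v huv hduv
  have hmem : m ∈ G.pl u v := by
    rw [hG.pl_spec u v huv hduv m hm, mem_perp3]
    have := mem_perp2.mp (Sig_sub_perp (sigM_sub hG huv hduv hm))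
    exact ⟨this.1, this.2, G.dag_refl m⟩
  have hplxy : G.pl x y = G.perp {x, y, w} := hG.pl_spec x y hxy hdxy w hw
  have hu : u ∈ G.perp {x, y, w} := hsub (pl_mem_left hG huv hduv)
  have hv : v ∈ G.perp {x, y, w} := hsub (pl_mem_right hG huv hduv)
  have hm' : m ∈ G.perp {x, y, w} := hsub hmem
  rw [hG.pl_spec u v huv hduv m hm, mem_perp3]
  rw [← hplxy] at ht hu hv hm'
  exact ⟨pl_clique hG hxy hdxy ht hu, pl_clique hG hxy hdxy ht hv,
    pl_clique hG hxy hdxy ht hm'⟩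

/-- L10: a point is determined by any two of its lines. -/
lemma pt_determined (hG : G.Axioms) {u v x y : G.L} (huv : u ≠ v) (hduv : G.dag u v)
    (hx : x ∈ G.pt u v) (hy : y ∈ G.pt u v) (hxy : x ≠ y) :
    G.pt x y = G.pt u v := by
  have hdxy : G.dag x y := pt_clique hG huv hduv hx hy
  obtain ⟨w, hw⟩ := hG.sigY_nonempty x y hxy hdxy
  have hsub : G.pt u v ⊆ G.perp {x, y, w} := by
    intro z hz
    rw [mem_perp3]
    refine ⟨pt_clique hG huv hduv hz hx, pt_clique hG huv hduv hz hy, ?_⟩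
    by_cases hpp : z ∈ G.perp (G.perp {x, y})
    · exact hpp w (Sig_sub_perp (sigY_sub hG hxy hdxy hw))
    · have hzS : z ∈ G.Sig x y :=
        ⟨mem_perp2.mpr ⟨pt_clique hG huv hduv hz hx, pt_clique hG huv hduv hz hy⟩, hpp⟩
      have hzS' : z ∈ G.SigY x y ∪ G.SigM x y := by
        rw [hG.sig_union x y hxy hdxy]; exact hzS
      rcases hzS' with hzY | hzM
      · exact (hG.sig_class x y hxy hdxy z hzS w
          (sigY_sub hG hxy hdxy hw)).mp (Or.inl ⟨hzY, hw⟩)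
      · exfalso
        have hsub2 : G.pt u v ⊆ G.pl x y := by
          rw [hG.pl_spec x y hxy hdxy z hzM]
          intro t ht
          rw [mem_perp3]
          exact ⟨pt_clique hG huv hduv ht hx, pt_clique hG huv hduv ht hy,
            pt_clique hG huv hduv ht hz⟩
        obtain ⟨e, f, hef, hdef, hdisj⟩ := exists_pt_disjoint_pl hG hxy hdxy
        obtain ⟨t, ht1, ht2⟩ := (hG.ax4 u v e f huv hduv hef hdef).1
        have : t ∈ G.pl x y ∩ G.pt e f := ⟨hsub2 ht1, ht2⟩
        rw [hdisj] at this; exact this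
  rw [hG.pt_spec x y hxy hdxy w hw]
  apply Set.Subset.antisymm _ hsub
  intro t ht
  obtain ⟨m, hm⟩ := hG.sigY_nonempty u v huv hduv
  have hmem : m ∈ G.pt u v := by
    rw [hG.pt_spec u v huv hduv m hm, mem_perp3]
    have := mem_perp2.mp (Sig_sub_perp (sigY_sub hG huv hduv hm))
    exact ⟨this.1, this.2, G.dag_refl m⟩
  have hptxy : G.pt x y = G.perp {x, y, w} := hG.pt_spec x y hxy hdxy w hw
  have hu : u ∈ G.perp {x, y, w} := hsub (pt_mem_left hG huv hduv)
  have hv : v ∈ G.perp {x, y, w} := hsub (pt_mem_right hG huv hduv)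
  have hm' : m ∈ G.perp {x, y, w} := hsub hmem
  rw [hG.pt_spec u v huv hduv m hm, mem_perp3]
  rw [← hptxy] at ht hu hv hm'
  exact ⟨pt_clique hG hxy hdxy ht hu, pt_clique hG hxy hdxy ht hv,
    pt_clique hG hxy hdxy ht hm'⟩

/-- L21: every line meeting two distinct incident lines lies in their point or plane. -/
lemma perp_split (hG : G.Axioms) {x y z : G.L} (hxy : x ≠ y) (hd : G.dag x y)
    (hz : z ∈ G.perp {x, y}) : z ∈ G.pt x y ∨ z ∈ G.pl x y := by
  obtain ⟨w, hw⟩ := hG.sigY_nonempty x y hxy hd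
  obtain ⟨m, hm⟩ := hG.sigM_nonempty x y hxy hd
  have hwm : ¬ G.dag w m := noYM hG hxy hd hw hm
  have hsplit := hG.ax23 x y hxy hd w (Sig_sub_perp (sigY_sub hG hxy hd hw))
    m (Sig_sub_perp (sigM_sub hG hxy hd hm)) hwm
  rw [hG.pt_spec x y hxy hd w hw, hG.pl_spec x y hxy hd m hm]
  rw [hsplit] at hz
  exact hz

/-- L23: a line of the plane of `x, y` not through their point is a ⊓-line. -/
lemma mem_sigM_of_not_pt (hG : G.Axioms) {x y z : G.L} (hxy : x ≠ y)
    (hd : G.dag x y) (hzx : G.dag z x) (hzy : G.dag z y) (hnpt : z ∉ G.pt x y) :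
    z ∈ G.SigM x y := by
  have hzp : z ∈ G.perp {x, y} := mem_perp2.mpr ⟨hzx, hzy⟩
  have hznpp : z ∉ G.perp (G.perp {x, y}) := by
    intro hpp
    apply hnpt
    obtain ⟨w, hw⟩ := hG.sigY_nonempty x y hxy hd
    rw [hG.pt_spec x y hxy hd w hw, mem_perp3]
    exact ⟨hzx, hzy, hpp w (Sig_sub_perp (sigY_sub hG hxy hd hw))⟩
  have hzS : z ∈ G.Sig x y := ⟨hzp, hznpp⟩
  have hzS' : z ∈ G.SigY x y ∪ G.SigM x y := by
    rw [hG.sig_union x y hxy hd]; exact hzS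
  rcases hzS' with hzY | hzM
  · exfalso
    apply hnpt
    rw [hG.pt_spec x y hxy hd z hzY, mem_perp3]
    exact ⟨hzx, hzy, G.dag_refl z⟩
  · exact hzM

/-- L14: a line of `Σ(x,y)` through the point of `x, y` is a ⋎-line. -/
lemma mem_sigY_of_pt (hG : G.Axioms) {x y z : G.L} (hxy : x ≠ y)
    (hd : G.dag x y) (hzS : z ∈ G.Sig x y) (hpt : z ∈ G.pt x y) :
    z ∈ G.SigY x y := by
  obtain ⟨w, hw⟩ := hG.sigY_nonempty x y hxy hd
  rw [hG.pt_spec x y hxy hd w hw, mem_perp3] at hpt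
  exact classY hG hxy hd hzS hw hpt.2.2

end LineGeom
namespace LineGeom

variable {G : LineGeom}

lemma YTriad_rot (hG : G.Axioms) {a b c : G.L} (h : G.YTriad a b c) :
    G.YTriad b c a := by
  obtain ⟨h1, h2, h3, h4, h5, h6, h7, h8, h9⟩ := h
  exact ⟨h2, fun e => h3 e.symm, fun e => h1 e.symm, h5, G.dag_symm h6,
    G.dag_symm h4, h8, h9, h7⟩

lemma YTriad_swap (hG : G.Axioms) {a b c : G.L} (h : G.YTriad a b c) :
    G.YTriad a c b := by
  obtain ⟨h1, h2, h3, h4, h5, h6, h7, h8, h9⟩ := h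
  refine ⟨h3, fun e => h2 e.symm, h1, h6, G.dag_symm h5, h4, ?_, ?_, ?_⟩
  · rw [hG.sigY_symm]; exact h7
  · rw [hG.sigY_symm]; exact h9
  · rw [hG.sigY_symm]; exact h8

/-- the three diagonals of a `⋎`-tetrad are pairwise distinct. -/
lemma keyNe (hG : G.Axioms) {o p q r a b c : G.L}
    (hT : G.YTetrad o p q r)
    (ha : G.pl o p ∩ G.pl q r = {a})
    (hb : G.pl o q ∩ G.pl r p = {b})
    (hc : G.pl o r ∩ G.pl p q = {c}) :
    a ≠ b ∧ b ≠ c ∧ a ≠ c := by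
  obtain ⟨Tpqr, Toqr, Torp, Topq⟩ := hT
  obtain ⟨hpq, hqr, hpr, dpq, dqr, dpr, mp_qr, mq_rp, mr_pq⟩ := Tpqr
  obtain ⟨hoq, hqr', hor', doq, dqr', dor', mo_qr, mq_ro, mr_oq⟩ := Toqr
  obtain ⟨hor, hrp, hop', dor, drp, dop', mo_rp, mr_po, mp_or⟩ := Torp
  obtain ⟨hop, hpq', hoq', dop, dpq', doq', mo_pq, mp_qo, mq_op⟩ := Topq
  have hamem : a ∈ G.pl o p ∩ G.pl q r := by rw [ha]; rfl
  have hbmem : b ∈ G.pl o q ∩ G.pl r p := by rw [hb]; rfl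
  have hcmem : c ∈ G.pl o r ∩ G.pl p q := by rw [hc]; rfl
  refine ⟨?_, ?_, ?_⟩
  · -- a ≠ b
    intro hab
    by_cases hao : a = o
    · exact sigY_not_mem_pl hG hqr dqr mo_qr (hao ▸ hamem.2)
    · have h1 : G.pl o a = G.pl o p :=
        pl_determined hG hop dop (pl_mem_left hG hop dop) hamem.1 (Ne.symm hao)
      have h2 : G.pl o a = G.pl o q :=
        pl_determined hG hoq doq (pl_mem_left hG hoq doq) (hab ▸ hbmem.1) (Ne.symm hao)
      have : q ∈ G.pl o p := by
        rw [← h1, h2]; exact pl_mem_right hG hoq doq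
      exact sigY_not_mem_pl hG hop dop mq_op this
  · -- b ≠ c
    intro hbc
    by_cases hbo : b = o
    · exact sigY_not_mem_pl hG hrp drp mo_rp (hbo ▸ hbmem.2)
    · have h1 : G.pl o b = G.pl o q :=
        pl_determined hG hoq doq (pl_mem_left hG hoq doq) hbmem.1 (Ne.symm hbo)
      have h2 : G.pl o b = G.pl o r :=
        pl_determined hG hor dor (pl_mem_left hG hor dor) (hbc ▸ hcmem.1) (Ne.symm hbo)
      have : r ∈ G.pl o q := by
        rw [← h1, h2]; exact pl_mem_right hG hor dor
      exact sigY_not_mem_pl hG hoq doq mr_oq this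
  · -- a ≠ c
    intro hac
    by_cases hap : a = p
    · exact sigY_not_mem_pl hG hqr dqr mp_qr (hap ▸ hamem.2)
    · have h1 : G.pl p a = G.pl o p := by
        have := pl_determined hG hop dop (pl_mem_right hG hop dop) hamem.1 (Ne.symm hap)
        exact this
      have h2 : G.pl p a = G.pl p q :=
        pl_determined hG hpq dpq (pl_mem_left hG hpq dpq) (hac ▸ hcmem.2) (Ne.symm hap)
      have : q ∈ G.pl o p := by
        rw [← h1, h2]; exact pl_mem_right hG hpq dpq
      exact sigY_not_mem_pl hG hop dop mq_op this

end LineGeom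
namespace LineGeom

variable {G : LineGeom}

/-- The key degenerate-case contradiction: assuming [H_⊓], the diagonal `b` of a
`⋎`-tetrad lies in `Σ(c,a)`. -/
lemma key (hG : G.Axioms) (hHM : G.HM) {o p q r a b c : G.L}
    (hT : G.YTetrad o p q r)
    (ha : G.pl o p ∩ G.pl q r = {a})
    (hb : G.pl o q ∩ G.pl r p = {b})
    (hc : G.pl o r ∩ G.pl p q = {c}) :
    b ∈ G.Sig c a := by
  have hne := keyNe hG hT ha hb hc
  obtain ⟨Tpqr, Toqr, Torp, Topq⟩ := hT
  obtain ⟨hpq, hqr, hpr, dpq, dqr, dpr, mp_qr, mq_rp, mr_pq⟩ := Tpqr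
  obtain ⟨hoq, hqr2, hor2, doq, dqr2, dor2, mo_qr, mq_ro, mr_oq⟩ := Toqr
  obtain ⟨hor, hrp, hop2, dor, drp, dop2, mo_rp, mr_po, mp_or⟩ := Torp
  obtain ⟨hop, hpq2, hoq2, dop, dpq2, doq2, mo_pq, mp_qo, mq_op⟩ := Topq
  have hamem : a ∈ G.pl o p ∩ G.pl q r := by rw [ha]; rfl
  have hbmem : b ∈ G.pl o q ∩ G.pl r p := by rw [hb]; rfl
  have hcmem : c ∈ G.pl o r ∩ G.pl p q := by rw [hc]; rfl
  -- extra SigY memberships via symmetry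
  have mq_po : q ∈ G.SigY p o := by rw [← hG.sigY_symm]; exact mq_op
  have mr_op : r ∈ G.SigY o p := by rw [hG.sigY_symm]; exact mr_po
  have mr_qp : r ∈ G.SigY q p := by rw [← hG.sigY_symm]; exact mr_pq
  have mo_rq : o ∈ G.SigY r q := by rw [← hG.sigY_symm]; exact mo_qr
  have mr_qo : r ∈ G.SigY q o := by rw [← hG.sigY_symm]; exact mr_oq
  have mp_rq : p ∈ G.SigY r q := by rw [← hG.sigY_symm]; exact mp_qr
  have mq_or : q ∈ G.SigY o r := by rw [hG.sigY_symm]; exact mq_ro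
  have mp_ro : p ∈ G.SigY r o := by rw [← hG.sigY_symm]; exact mp_or
  have mo_qp : o ∈ G.SigY q p := by rw [← hG.sigY_symm]; exact mo_pq
  -- the point P of the tetrad
  have hPdef : G.pt o p = G.perp {o, p, q} := hG.pt_spec o p hop dop q mq_op
  have hoP : o ∈ G.pt o p := pt_mem_left hG hop dop
  have hpP : p ∈ G.pt o p := pt_mem_right hG hop dop
  have hqP : q ∈ G.pt o p := by
    rw [hPdef, mem_perp3]; exact ⟨G.dag_symm doq, G.dag_symm dpq, G.dag_refl q⟩
  have hrP : r ∈ G.pt o p := by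
    rw [hPdef, mem_perp3]; exact ⟨G.dag_symm dor, G.dag_symm dpr, G.dag_symm dqr⟩
  have haP : a ∈ G.pt o p := by
    rw [hPdef, mem_perp3]
    exact ⟨pl_clique hG hop dop hamem.1 (pl_mem_left hG hop dop),
      pl_clique hG hop dop hamem.1 (pl_mem_right hG hop dop),
      pl_clique hG hqr dqr hamem.2 (pl_mem_left hG hqr dqr)⟩
  have hbP : b ∈ G.pt o p := by
    rw [hPdef, mem_perp3]
    exact ⟨pl_clique hG hoq doq hbmem.1 (pl_mem_left hG hoq doq),
      pl_clique hG hrp drp hbmem.2 (pl_mem_right hG hrp drp),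
      pl_clique hG hoq doq hbmem.1 (pl_mem_right hG hoq doq)⟩
  have hcP : c ∈ G.pt o p := by
    rw [hPdef, mem_perp3]
    exact ⟨pl_clique hG hor dor hcmem.1 (pl_mem_left hG hor dor),
      pl_clique hG hpq dpq hcmem.2 (pl_mem_left hG hpq dpq),
      pl_clique hG hpq dpq hcmem.2 (pl_mem_right hG hpq dpq)⟩
  have Pcl : ∀ {x y : G.L}, x ∈ G.pt o p → y ∈ G.pt o p → G.dag x y :=
    fun hx hy => pt_clique hG hop dop hx hy
  refine ⟨mem_perp2.mpr ⟨Pcl hbP hcP, Pcl hbP haP⟩, ?_⟩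
  intro hdeg
  -- hdeg : b ∈ perp (perp {c, a}); derive False
  -- choose a plane μ = pl e f disjoint from the point P
  obtain ⟨e, f, hef, hdef, hdisj⟩ := exists_pl_disjoint_pt hG hop dop
  have notμ : ∀ z : G.L, z ∈ G.pt o p → z ∈ G.pl e f → False := by
    intro z h1 h2
    have : z ∈ G.pt o p ∩ G.pl e f := ⟨h1, h2⟩
    rw [hdisj] at this; exact this
  have μcl : ∀ {x y : G.L}, x ∈ G.pl e f → y ∈ G.pl e f → G.dag x y :=
    fun hx hy => pl_clique hG hef hdef hx hy
  have μdet : ∀ {x y : G.L}, x ∈ G.pl e f → y ∈ G.pl e f → x ≠ y →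
      G.pl x y = G.pl e f := fun hx hy hxy => pl_determined hG hef hdef hx hy hxy
  -- the six section lines
  obtain ⟨sop, sopA, sopB⟩ := (hG.ax4 o p e f hop dop hef hdef).2
  obtain ⟨spq, spqA, spqB⟩ := (hG.ax4 p q e f hpq dpq hef hdef).2
  obtain ⟨sqr, sqrA, sqrB⟩ := (hG.ax4 q r e f hqr dqr hef hdef).2
  obtain ⟨sro, sroA, sroB⟩ := (hG.ax4 r o e f (Ne.symm hor) (G.dag_symm dor) hef hdef).2
  obtain ⟨soq, soqA, soqB⟩ := (hG.ax4 o q e f hoq doq hef hdef).2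
  obtain ⟨spr, sprA, sprB⟩ := (hG.ax4 p r e f hpr dpr hef hdef).2
  have sroA' : sro ∈ G.pl o r := by rw [pl_symm hG hor dor]; exact sroA
  have sprA' : spr ∈ G.pl r p := by rw [pl_symm hG (Ne.symm hpr) (G.dag_symm dpr)]; exact sprA
  -- uniqueness of the section line of a plane
  have plμuniq : ∀ {x y z z' : G.L}, x ≠ y → G.dag x y → x ∈ G.pt o p →
      z ∈ G.pl x y → z ∈ G.pl e f → z' ∈ G.pl x y → z' ∈ G.pl e f → z = z' := by
    intro x y z z' hxy hdxy hxP hz hzμ hz' hz'μ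
    by_contra hzz
    have h1 : G.pl z z' = G.pl x y := pl_determined hG hxy hdxy hz hz' hzz
    have h2 : G.pl z z' = G.pl e f := μdet hzμ hz'μ hzz
    have : x ∈ G.pl e f := by rw [← h2, h1]; exact pl_mem_left hG hxy hdxy
    exact notμ x hxP this
  -- adjacent section lines are distinct
  have adjNe : ∀ {x y₁ y₂ s s₂ : G.L}, x ≠ y₁ → G.dag x y₁ → x ≠ y₂ → G.dag x y₂ →
      x ∈ G.pt o p → y₂ ∈ G.SigY x y₁ → s ∈ G.pl x y₁ → s ∈ G.pl e f →
      s₂ ∈ G.pl x y₂ → s₂ ∈ G.pl e f → s ≠ s₂ := by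
    intro x y₁ y₂ s s₂ hxy1 hd1 hxy2 hd2 hxP hY hs hsμ hs2 hs2μ heq
    subst heq
    by_cases hsx : s = x
    · exact notμ x hxP (hsx ▸ hsμ)
    · have h1 : G.pl x s = G.pl x y₁ :=
        pl_determined hG hxy1 hd1 (pl_mem_left hG hxy1 hd1) hs (Ne.symm hsx)
      have h2 : G.pl x s = G.pl x y₂ :=
        pl_determined hG hxy2 hd2 (pl_mem_left hG hxy2 hd2) hs2 (Ne.symm hsx)
      have : y₂ ∈ G.pl x y₁ := by
        rw [← h1, h2]; exact pl_mem_right hG hxy2 hd2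
      exact sigY_not_mem_pl hG hxy1 hd1 hY this
  have n1 : sop ≠ spq := adjNe (Ne.symm hop) (G.dag_symm dop) hpq dpq hpP mq_po
    (by rw [← pl_symm hG hop dop]; exact sopA) sopB spqA spqB
  have n2 : sop ≠ sro := adjNe hop dop hor dor hoP mr_op sopA sopB sroA' sroB
  have n3 : spq ≠ sqr := adjNe (Ne.symm hpq) (G.dag_symm dpq) hqr dqr hqP mr_qp
    (by rw [← pl_symm hG hpq dpq]; exact spqA) spqB sqrA sqrB
  have n4 : sqr ≠ sro := adjNe (Ne.symm hqr) (G.dag_symm dqr) (Ne.symm hor)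
    (G.dag_symm dor) hrP mo_rq
    (by rw [← pl_symm hG hqr dqr]; exact sqrA) sqrB sroA sroB
  have n5 : sop ≠ soq := adjNe hop dop hoq doq hoP mq_op sopA sopB soqA soqB
  have n6 : soq ≠ sqr := adjNe (Ne.symm hoq) (G.dag_symm doq) hqr dqr hqP mr_qo
    (by rw [← pl_symm hG hoq doq]; exact soqA) soqB sqrA sqrB
  have n7 : sop ≠ spr := adjNe (Ne.symm hop) (G.dag_symm dop) hpr dpr hpP mr_po
    (by rw [← pl_symm hG hop dop]; exact sopA) sopB sprA sprB
  have n8 : sqr ≠ spr := adjNe (Ne.symm hqr) (G.dag_symm dqr) (Ne.symm hpr)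
    (G.dag_symm dpr) hrP mp_rq
    (by rw [← pl_symm hG hqr dqr]; exact sqrA) sqrB
    (by rw [← pl_symm hG hpr dpr]; exact sprA) sprB
  -- opposite section lines are distinct (via the diagonal hypotheses)
  have nOp1 : sop ≠ sqr := by
    intro heq
    have : sop ∈ G.pl o p ∩ G.pl q r := ⟨sopA, heq ▸ sqrA⟩
    rw [ha] at this
    exact notμ a haP (this ▸ sopB)
  have nOp2 : spq ≠ sro := by
    intro heq
    have : spq ∈ G.pl o r ∩ G.pl p q := ⟨heq ▸ sroA', spqA⟩
    rw [hc] at this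
    exact notμ c hcP (this ▸ spqB)
  have nOp3 : soq ≠ spr := by
    intro heq
    have : soq ∈ G.pl o q ∩ G.pl r p := ⟨soqA, heq ▸ sprA'⟩
    rw [hb] at this
    exact notμ b hbP (this ▸ soqB)
  -- membership in section stars
  have splitPt : ∀ {x y z : G.L}, x ≠ y → x ∈ G.pl e f → y ∈ G.pl e f →
      G.dag z x → G.dag z y → z ∉ G.pl e f → z ∈ G.pt x y := by
    intro x y z hxy hxμ hyμ hzx hzy hzμ
    rcases perp_split hG hxy (μcl hxμ hyμ) (mem_perp2.mpr ⟨hzx, hzy⟩) with h | h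
    · exact h
    · exact absurd ((μdet hxμ hyμ hxy) ▸ h) hzμ
  -- stars at the vertices
  have hoVo : o ∈ G.pt sop sro := splitPt n2 sopB sroB
    (pl_clique hG hop dop (pl_mem_left hG hop dop) sopA)
    (pl_clique hG hor dor (pl_mem_left hG hor dor) sroA')
    (fun h => notμ o hoP h)
  have hpVp : p ∈ G.pt sop spq := splitPt n1 sopB spqB
    (pl_clique hG hop dop (pl_mem_right hG hop dop) sopA)
    (pl_clique hG hpq dpq (pl_mem_left hG hpq dpq) spqA)
    (fun h => notμ p hpP h)
  have hqVq : q ∈ G.pt spq sqr := splitPt n3 spqB sqrB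
    (pl_clique hG hpq dpq (pl_mem_right hG hpq dpq) spqA)
    (pl_clique hG hqr dqr (pl_mem_left hG hqr dqr) sqrA)
    (fun h => notμ q hqP h)
  have hrVr : r ∈ G.pt sqr sro := splitPt n4 sqrB sroB
    (pl_clique hG hqr dqr (pl_mem_right hG hqr dqr) sqrA)
    (pl_clique hG hor dor (pl_mem_right hG hor dor) sroA')
    (fun h => notμ r hrP h)
  have haD1 : a ∈ G.pt sop sqr := splitPt nOp1 sopB sqrB
    (pl_clique hG hop dop hamem.1 sopA)
    (pl_clique hG hqr dqr hamem.2 sqrA)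
    (fun h => notμ a haP h)
  have hcD2 : c ∈ G.pt sro spq := splitPt (Ne.symm nOp2) sroB spqB
    (pl_clique hG hor dor hcmem.1 sroA')
    (pl_clique hG hpq dpq hcmem.2 spqA)
    (fun h => notμ c hcP h)
  have hbB : b ∈ G.pt soq spr := splitPt nOp3 soqB sprB
    (pl_clique hG hoq doq hbmem.1 soqA)
    (pl_clique hG hrp drp hbmem.2 sprA')
    (fun h => notμ b hbP h)
  -- collapse helper: a section star can never contain two tetrad-point lines
  have tetracol : ∀ {t₁ t₂ x y : G.L}, t₁ ∈ G.pt o p → t₂ ∈ G.pt o p → t₁ ≠ t₂ →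
      x ≠ y → G.dag x y → t₁ ∈ G.pt x y → t₂ ∈ G.pt x y → x ∈ G.pl e f → False := by
    intro t₁ t₂ x y h1P h2P h12 hxy hdxy h1 h2 hxμ
    have e1 : G.pt t₁ t₂ = G.pt x y := pt_determined hG hxy hdxy h1 h2 h12
    have e2 : G.pt t₁ t₂ = G.pt o p := pt_determined hG hop dop h1P h2P h12
    have : x ∈ G.pt o p := by rw [← e2, e1]; exact pt_mem_left hG hxy hdxy
    exact notμ x this hxμ
  have stEq : ∀ {x₁ x₂ u v u' v' : G.L}, x₁ ≠ x₂ → u ≠ v → G.dag u v →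
      u' ≠ v' → G.dag u' v' → x₁ ∈ G.pt u v → x₂ ∈ G.pt u v →
      x₁ ∈ G.pt u' v' → x₂ ∈ G.pt u' v' → G.pt u v = G.pt u' v' := by
    intro x₁ x₂ u v u' v' h12 huv hduv huv' hduv' a1 a2 b1 b2
    rw [← pt_determined hG huv hduv a1 a2 h12, ← pt_determined hG huv' hduv' b1 b2 h12]
  -- star inequalities
  have dμ1 : G.dag sop spq := μcl sopB spqB
  have dμ2 : G.dag sop sro := μcl sopB sroB
  have dμ3 : G.dag spq sqr := μcl spqB sqrB
  have dμ4 : G.dag sqr sro := μcl sqrB sroB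
  have dμ5 : G.dag sop sqr := μcl sopB sqrB
  have dμ6 : G.dag sro spq := μcl sroB spqB
  have dμ7 : G.dag soq spr := μcl soqB sprB
  have hVoVp : G.pt sop sro = G.pt sop spq → False := fun heq =>
    tetracol hoP hpP (fun h => hop h) n1 dμ1 (heq ▸ hoVo) hpVp sopB
  have hVqVr : G.pt spq sqr = G.pt sqr sro → False := fun heq =>
    tetracol hqP hrP (fun h => hqr h) n4 dμ4 (heq ▸ hqVq) hrVr sqrB
  have hVpVr : G.pt sop spq = G.pt sqr sro → False := fun heq =>
    tetracol hpP hrP (fun h => hpr h) n4 dμ4 (heq ▸ hpVp) hrVr sqrB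
  have hVoVq : G.pt sop sro = G.pt spq sqr → False := fun heq =>
    tetracol hoP hqP (fun h => hoq h) n3 dμ3 (heq ▸ hoVo) hqVq spqB
  have hVoVr : G.pt sop sro = G.pt sqr sro → False := fun heq =>
    tetracol hoP hrP (fun h => hor h) n4 dμ4 (heq ▸ hoVo) hrVr sqrB
  have hVpVq : G.pt sop spq = G.pt spq sqr → False := fun heq =>
    tetracol hpP hqP (fun h => hpq h) n3 dμ3 (heq ▸ hpVp) hqVq spqB
  have hD1D2 : G.pt sop sqr = G.pt sro spq → False := fun heq =>
    tetracol haP hcP hne.2.2 (Ne.symm nOp2) dμ6 (heq ▸ haD1) hcD2 sroB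
  -- not-in-star facts
  have NspqVr : spq ∉ G.pt sqr sro := fun h =>
    hVqVr (stEq n3 n3 dμ3 n4 dμ4 (pt_mem_left hG n3 dμ3) (pt_mem_right hG n3 dμ3)
      h (pt_mem_left hG n4 dμ4))
  have NsroVq : sro ∉ G.pt spq sqr := fun h =>
    hVqVr (stEq (Ne.symm n4) n3 dμ3 n4 dμ4 h (pt_mem_right hG n3 dμ3)
      (pt_mem_right hG n4 dμ4) (pt_mem_left hG n4 dμ4))
  have NsopVr : sop ∉ G.pt sqr sro := fun h =>
    hVoVr (stEq n2 n2 dμ2 n4 dμ4 (pt_mem_left hG n2 dμ2) (pt_mem_right hG n2 dμ2)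
      h (pt_mem_right hG n4 dμ4))
  have NsqrVo : sqr ∉ G.pt sop sro := fun h =>
    hVoVr (stEq n4 n2 dμ2 n4 dμ4 h (pt_mem_right hG n2 dμ2)
      (pt_mem_left hG n4 dμ4) (pt_mem_right hG n4 dμ4))
  have NsroVp : sro ∉ G.pt sop spq := fun h =>
    hVoVp (stEq (Ne.symm n2) n2 dμ2 n1 dμ1 (pt_mem_right hG n2 dμ2)
      (pt_mem_left hG n2 dμ2) h (pt_mem_left hG n1 dμ1))
  have NspqVo : spq ∉ G.pt sop sro := fun h =>
    hVoVp (stEq (Ne.symm n1) n2 dμ2 n1 dμ1 h (pt_mem_left hG n2 dμ2)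
      (pt_mem_right hG n1 dμ1) (pt_mem_left hG n1 dμ1))
  have NsqrVp : sqr ∉ G.pt sop spq := fun h =>
    hVpVq (stEq (Ne.symm n3) n1 dμ1 n3 dμ3 h (pt_mem_right hG n1 dμ1)
      (pt_mem_right hG n3 dμ3) (pt_mem_left hG n3 dμ3))
  have NsopVq : sop ∉ G.pt spq sqr := fun h =>
    hVpVq (stEq n1 n1 dμ1 n3 dμ3 (pt_mem_left hG n1 dμ1) (pt_mem_right hG n1 dμ1)
      h (pt_mem_left hG n3 dμ3))
  -- chained not-in-star facts
  have NsqrD2 : sqr ∉ G.pt sro spq := by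
    intro h
    have heq : G.pt sro spq = G.pt sqr sro :=
      stEq n4 (Ne.symm nOp2) dμ6 n4 dμ4 h (pt_mem_left hG (Ne.symm nOp2) dμ6)
        (pt_mem_left hG n4 dμ4) (pt_mem_right hG n4 dμ4)
    exact NspqVr (heq ▸ pt_mem_right hG (Ne.symm nOp2) dμ6)
  have NsroD1 : sro ∉ G.pt sop sqr := by
    intro h
    have heq : G.pt sop sqr = G.pt sop sro :=
      stEq (Ne.symm n2) nOp1 dμ5 n2 dμ2 h (pt_mem_left hG nOp1 dμ5)
        (pt_mem_right hG n2 dμ2) (pt_mem_left hG n2 dμ2)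
    exact NsqrVo (heq ▸ pt_mem_right hG nOp1 dμ5)
  have NsopD2 : sop ∉ G.pt sro spq := by
    intro h
    have heq : G.pt sro spq = G.pt sop spq :=
      stEq n1 (Ne.symm nOp2) dμ6 n1 dμ1 h (pt_mem_right hG (Ne.symm nOp2) dμ6)
        (pt_mem_left hG n1 dμ1) (pt_mem_right hG n1 dμ1)
    exact NsroVp (heq ▸ pt_mem_left hG (Ne.symm nOp2) dμ6)
  have NspqD1 : spq ∉ G.pt sop sqr := by
    intro h
    have heq : G.pt sop sqr = G.pt sop spq :=
      stEq (Ne.symm n1) nOp1 dμ5 n1 dμ1 h (pt_mem_left hG nOp1 dμ5)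
        (pt_mem_right hG n1 dμ1) (pt_mem_left hG n1 dμ1)
    exact NsqrVp (heq ▸ pt_mem_right hG nOp1 dμ5)
  -- the four ⊓-triads of the section tetrad
  have T1 : G.MTriad spq sqr sro :=
    ⟨n3, n4, nOp2, dμ3, dμ4, G.dag_symm dμ6,
      mem_sigM_of_not_pt hG n4 dμ4 dμ3 (G.dag_symm dμ6) NspqVr,
      mem_sigM_of_not_pt hG (Ne.symm nOp2) dμ6 dμ4 (G.dag_symm dμ3) NsqrD2,
      mem_sigM_of_not_pt hG n3 dμ3 dμ6 (G.dag_symm dμ4) NsroVq⟩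
  have T2 : G.MTriad sop sqr sro :=
    ⟨nOp1, n4, n2, dμ5, dμ4, dμ2,
      mem_sigM_of_not_pt hG n4 dμ4 dμ5 dμ2 NsopVr,
      mem_sigM_of_not_pt hG (Ne.symm n2) (G.dag_symm dμ2) dμ4 (G.dag_symm dμ5)
        (fun h => NsqrVo (by rwa [pt_symm hG n2 dμ2])),
      mem_sigM_of_not_pt hG nOp1 dμ5 (G.dag_symm dμ2) (G.dag_symm dμ4) NsroD1⟩
  have T3 : G.MTriad sop sro spq :=
    ⟨n2, Ne.symm nOp2, n1, dμ2, dμ6, dμ1,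
      mem_sigM_of_not_pt hG (Ne.symm nOp2) dμ6 dμ2 dμ1 NsopD2,
      mem_sigM_of_not_pt hG (Ne.symm n1) (G.dag_symm dμ1) dμ6 (G.dag_symm dμ2)
        (fun h => NsroVp (by rwa [pt_symm hG n1 dμ1])),
      mem_sigM_of_not_pt hG n2 dμ2 (G.dag_symm dμ1) (G.dag_symm dμ6) NspqVo⟩
  have T4 : G.MTriad sop spq sqr :=
    ⟨n1, n3, nOp1, dμ1, dμ3, dμ5,
      mem_sigM_of_not_pt hG n3 dμ3 dμ1 dμ5 NsopVq,
      mem_sigM_of_not_pt hG (Ne.symm nOp1) (G.dag_symm dμ5) dμ3 (G.dag_symm dμ1)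
        (fun h => NspqD1 (by rwa [pt_symm hG nOp1 dμ5])),
      mem_sigM_of_not_pt hG n1 dμ1 (G.dag_symm dμ5) (G.dag_symm dμ3) NsqrVp⟩
  -- the first diagonal: pt sop spq ∩ pt sqr sro = {spr}
  have hpsop : p ≠ sop := fun h => notμ p hpP (h ▸ sopB)
  have hosop : o ≠ sop := fun h => notμ o hoP (h ▸ sopB)
  have hrsqr : r ≠ sqr := fun h => notμ r hrP (h ▸ sqrB)
  have hqsqr : q ≠ sqr := fun h => notμ q hqP (h ▸ sqrB)
  have dpsop : G.dag p sop := pl_clique hG hop dop (pl_mem_right hG hop dop) sopA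
  have dosop : G.dag o sop := pl_clique hG hop dop (pl_mem_left hG hop dop) sopA
  have drsqr : G.dag r sqr := pl_clique hG hqr dqr (pl_mem_right hG hqr dqr) sqrA
  have dqsqr : G.dag q sqr := pl_clique hG hqr dqr (pl_mem_left hG hqr dqr) sqrA
  have hVp_eq : G.pt p sop = G.pt sop spq :=
    pt_determined hG n1 dμ1 hpVp (pt_mem_left hG n1 dμ1) hpsop
  have hVo_eq : G.pt o sop = G.pt sop sro :=
    pt_determined hG n2 dμ2 hoVo (pt_mem_left hG n2 dμ2) hosop
  have hVr_eq : G.pt r sqr = G.pt sqr sro :=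
    pt_determined hG n4 dμ4 hrVr (pt_mem_left hG n4 dμ4) hrsqr
  have hVq_eq : G.pt q sqr = G.pt spq sqr :=
    pt_determined hG n3 dμ3 hqVq (pt_mem_right hG n3 dμ3) hqsqr
  have hplpsop : G.pl p sop = G.pl o p :=
    pl_determined hG hop dop (pl_mem_right hG hop dop) sopA hpsop
  have hplosop : G.pl o sop = G.pl o p :=
    pl_determined hG hop dop (pl_mem_left hG hop dop) sopA hosop
  have hplrsqr : G.pl r sqr = G.pl q r :=
    pl_determined hG hqr dqr (pl_mem_right hG hqr dqr) sqrA hrsqr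
  have hplqsqr : G.pl q sqr = G.pl q r :=
    pl_determined hG hqr dqr (pl_mem_left hG hqr dqr) sqrA hqsqr
  have hsprVp : spr ∈ G.pt sop spq := by
    rcases perp_split hG hpsop dpsop (mem_perp2.mpr
      ⟨pl_clique hG hpr dpr sprA (pl_mem_left hG hpr dpr), μcl sprB sopB⟩) with h | h
    · rwa [hVp_eq] at h
    · rw [hplpsop] at h
      exact absurd (plμuniq hop dop hoP h sprB sopA sopB) (Ne.symm n7)
  have hsprVr : spr ∈ G.pt sqr sro := by
    rcases perp_split hG hrsqr drsqr (mem_perp2.mpr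
      ⟨pl_clique hG hpr dpr sprA (pl_mem_right hG hpr dpr), μcl sprB sqrB⟩) with h | h
    · rwa [hVr_eq] at h
    · rw [hplrsqr] at h
      exact absurd (plμuniq hqr dqr hqP h sprB sqrA sqrB) (Ne.symm n8)
  have hA : G.pt sop spq ∩ G.pt sqr sro = {spr} := by
    apply Set.eq_singleton_iff_unique_mem.mpr
    refine ⟨⟨hsprVp, hsprVr⟩, ?_⟩
    intro t ht
    by_contra htne
    exact hVpVr (stEq htne n1 dμ1 n4 dμ4 ht.1 hsprVp ht.2 hsprVr)
  -- the third diagonal: pt sop sro ∩ pt spq sqr = {soq}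
  have hsoqVo : soq ∈ G.pt sop sro := by
    rcases perp_split hG hosop dosop (mem_perp2.mpr
      ⟨pl_clique hG hoq doq soqA (pl_mem_left hG hoq doq), μcl soqB sopB⟩) with h | h
    · rwa [hVo_eq] at h
    · rw [hplosop] at h
      exact absurd (plμuniq hop dop hoP h soqB sopA sopB) (Ne.symm n5)
  have hsoqVq : soq ∈ G.pt spq sqr := by
    rcases perp_split hG hqsqr dqsqr (mem_perp2.mpr
      ⟨pl_clique hG hoq doq soqA (pl_mem_right hG hoq doq), μcl soqB sqrB⟩) with h | h
    · rwa [hVq_eq] at h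
    · rw [hplqsqr] at h
      exact absurd (plμuniq hqr dqr hqP h soqB sqrA sqrB) n6
  have hC : G.pt sop sro ∩ G.pt spq sqr = {soq} := by
    apply Set.eq_singleton_iff_unique_mem.mpr
    refine ⟨⟨hsoqVo, hsoqVq⟩, ?_⟩
    intro t ht
    by_contra htne
    exact hVoVq (stEq htne n2 dμ2 n3 dμ3 ht.1 hsoqVo ht.2 hsoqVq)
  -- the middle diagonal
  obtain ⟨g, hgD1, hgD2⟩ := (hG.ax4 sop sqr sro spq nOp1 dμ5 (Ne.symm nOp2) dμ6).1
  have hBsing : G.pt sop sqr ∩ G.pt sro spq = {g} := by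
    apply Set.eq_singleton_iff_unique_mem.mpr
    refine ⟨⟨hgD1, hgD2⟩, ?_⟩
    intro t ht
    by_contra htne
    exact hD1D2 (stEq htne nOp1 dμ5 (Ne.symm nOp2) dμ6 ht.1 hgD1 ht.2 hgD2)
  -- apply [H_⊓]
  have hMT : G.MTriad spr g soq :=
    hHM sop spq sqr sro spr g soq ⟨T1, T2, T3, T4⟩ hA hBsing hC
  have hgM : g ∈ G.SigM soq spr := hMT.2.2.2.2.2.2.2.1
  -- g lies in the plane μ
  have d_g_sop : G.dag g sop := pt_clique hG nOp1 dμ5 hgD1 (pt_mem_left hG nOp1 dμ5)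
  have d_g_sro : G.dag g sro :=
    pt_clique hG (Ne.symm nOp2) dμ6 hgD2 (pt_mem_left hG (Ne.symm nOp2) dμ6)
  have d_g_spq : G.dag g spq :=
    pt_clique hG (Ne.symm nOp2) dμ6 hgD2 (pt_mem_right hG (Ne.symm nOp2) dμ6)
  have hgμ : g ∈ G.pl e f := by
    by_contra hgμ
    have hgop : g ≠ sop := fun h => hgμ (h ▸ sopB)
    have hgVo : g ∈ G.pt sop sro := splitPt n2 sopB sroB d_g_sop d_g_sro hgμ
    have hgVp : g ∈ G.pt sop spq := splitPt n1 sopB spqB d_g_sop d_g_spq hgμ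
    exact hVoVp (stEq hgop n2 dμ2 n1 dμ1 hgVo (pt_mem_left hG n2 dμ2) hgVp
      (pt_mem_left hG n1 dμ1))
  -- g passes through the point of soq and spr (using the degeneracy hypothesis)
  have d_g_a : G.dag g a := pt_clique hG nOp1 dμ5 hgD1 haD1
  have d_g_c : G.dag g c := pt_clique hG (Ne.symm nOp2) dμ6 hgD2 hcD2
  have d_b_g : G.dag b g := hdeg g (mem_perp2.mpr ⟨d_g_c, d_g_a⟩)
  have hbsoq : b ≠ soq := fun h => notμ b hbP (h ▸ soqB)
  have d_b_soq : G.dag b soq := pl_clique hG hoq doq hbmem.1 soqA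
  have hBdet : G.pt b soq = G.pt soq spr :=
    pt_determined hG nOp3 dμ7 hbB (pt_mem_left hG nOp3 dμ7) hbsoq
  have hgB : g ∈ G.pt soq spr := by
    rcases perp_split hG hbsoq d_b_soq (mem_perp2.mpr
      ⟨G.dag_symm d_b_g, μcl hgμ soqB⟩) with h | h
    · rwa [hBdet] at h
    · by_cases hgsoq : g = soq
      · rw [hgsoq]; exact pt_mem_left hG nOp3 dμ7
      · exact absurd (plμuniq hbsoq d_b_soq hbP h hgμ
          (pl_mem_right hG hbsoq d_b_soq) soqB) hgsoq
  -- final contradiction: g would be in the pencil of soq, spr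
  have hgSig : g ∈ G.Sig soq spr := sigM_sub hG nOp3 dμ7 hgM
  apply hgSig.2
  intro t ht
  rcases perp_split hG nOp3 dμ7 ht with h | h
  · exact pt_clique hG nOp3 dμ7 hgB h
  · exact μcl hgμ ((μdet soqB sprB nOp3) ▸ h)

end LineGeom
namespace LineGeom

variable {G : LineGeom}

/-- The direct implication: [H_⊓] implies [H_⋎]. -/
lemma hm_to_hy (hG : G.Axioms) (hHM : G.HM) : G.HY := by
  intro o p q r a b c hT ha hb hc
  obtain ⟨hab, hbc, hac⟩ := keyNe hG hT ha hb hc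
  obtain ⟨Tpqr, Toqr, Torp, Topq⟩ := hT
  have hop : o ≠ p := Topq.1
  have hoq : o ≠ q := Toqr.1
  have hor : o ≠ r := Torp.1
  have hpq : p ≠ q := Tpqr.1
  have hqr : q ≠ r := Tpqr.2.1
  have hpr : p ≠ r := Tpqr.2.2.1
  have hrp : r ≠ p := Ne.symm hpr
  have dop : G.dag o p := Topq.2.2.2.1
  have doq : G.dag o q := Toqr.2.2.2.1
  have dor : G.dag o r := Torp.2.2.2.1
  have dpq : G.dag p q := Tpqr.2.2.2.1
  have dqr : G.dag q r := Tpqr.2.2.2.2.1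
  have dpr : G.dag p r := Tpqr.2.2.2.2.2.1
  have drp : G.dag r p := G.dag_symm dpr
  have mq_op : q ∈ G.SigY o p := Topq.2.2.2.2.2.2.2.2
  -- Σ-memberships of the three diagonals, via `key` on permuted tetrads
  have hSb : b ∈ G.Sig c a := key hG hHM ⟨Tpqr, Toqr, Torp, Topq⟩ ha hb hc
  have hT2 : G.YTetrad o q p r :=
    ⟨YTriad_swap hG (YTriad_rot hG Tpqr), YTriad_swap hG Torp,
      YTriad_swap hG Toqr, YTriad_swap hG Topq⟩
  have ha2 : G.pl o q ∩ G.pl p r = {b} := by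
    rw [← pl_symm hG hrp drp]; exact hb
  have hb2 : G.pl o p ∩ G.pl r q = {a} := by
    rw [← pl_symm hG hqr dqr]; exact ha
  have hc2 : G.pl o r ∩ G.pl q p = {c} := by
    rw [← pl_symm hG hpq dpq]; exact hc
  have hSa : a ∈ G.Sig b c := by
    rw [Sig_symm]
    exact key hG hHM hT2 ha2 hb2 hc2
  have hT3 : G.YTetrad o q r p := ⟨YTriad_rot hG Tpqr, Torp, Topq, Toqr⟩
  have hSc : c ∈ G.Sig a b := key hG hHM hT3 hb hc ha
  -- the common point of the tetrad
  have hPdef : G.pt o p = G.perp {o, p, q} := hG.pt_spec o p hop dop q mq_op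
  have hoP : o ∈ G.pt o p := pt_mem_left hG hop dop
  have hpP : p ∈ G.pt o p := pt_mem_right hG hop dop
  have haP : a ∈ G.pt o p := by
    have hamem : a ∈ G.pl o p ∩ G.pl q r := by rw [ha]; rfl
    rw [hPdef, mem_perp3]
    exact ⟨pl_clique hG hop dop hamem.1 (pl_mem_left hG hop dop),
      pl_clique hG hop dop hamem.1 (pl_mem_right hG hop dop),
      pl_clique hG hqr dqr hamem.2 (pl_mem_left hG hqr dqr)⟩
  have hbP : b ∈ G.pt o p := by
    have hbmem : b ∈ G.pl o q ∩ G.pl r p := by rw [hb]; rfl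
    rw [hPdef, mem_perp3]
    exact ⟨pl_clique hG hoq doq hbmem.1 (pl_mem_left hG hoq doq),
      pl_clique hG hrp drp hbmem.2 (pl_mem_right hG hrp drp),
      pl_clique hG hoq doq hbmem.1 (pl_mem_right hG hoq doq)⟩
  have hcP : c ∈ G.pt o p := by
    have hcmem : c ∈ G.pl o r ∩ G.pl p q := by rw [hc]; rfl
    rw [hPdef, mem_perp3]
    exact ⟨pl_clique hG hor dor hcmem.1 (pl_mem_left hG hor dor),
      pl_clique hG hpq dpq hcmem.2 (pl_mem_left hG hpq dpq),
      pl_clique hG hpq dpq hcmem.2 (pl_mem_right hG hpq dpq)⟩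
  have Pcl : ∀ {x y : G.L}, x ∈ G.pt o p → y ∈ G.pt o p → G.dag x y :=
    fun hx hy => pt_clique hG hop dop hx hy
  -- upgrade Σ-membership to Σ_⋎-membership
  have upg : ∀ {x y z : G.L}, x ∈ G.pt o p → y ∈ G.pt o p → z ∈ G.pt o p →
      y ≠ z → x ∈ G.Sig y z → x ∈ G.SigY y z := by
    intro x y z hx hy hz hyz hS
    have dyz : G.dag y z := Pcl hy hz
    have hdet : G.pt y z = G.pt o p := pt_determined hG hop dop hy hz hyz
    obtain ⟨w, hw⟩ := hG.sigY_nonempty y z hyz dyz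
    have hxw : x ∈ G.perp {y, z, w} := by
      rw [← hG.pt_spec y z hyz dyz w hw, hdet]; exact hx
    exact classY hG hyz dyz hS hw (mem_perp3.mp hxw).2.2
  exact ⟨hab, hbc, hac, Pcl haP hbP, Pcl hbP hcP, Pcl haP hcP,
    upg haP hbP hcP hbc hSa,
    upg hbP hcP haP (fun h => hac h.symm) hSb,
    upg hcP haP hbP hab hSc⟩

/-- The dual linear framework: classes and points/planes interchanged. -/
def dualG (G : LineGeom) : LineGeom where
  L := G.L
  dag := G.dag
  dag_refl := G.dag_refl
  dag_symm := G.dag_symm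
  SigY := G.SigM
  SigM := G.SigY
  pt := G.pl
  pl := G.pt

lemma dual_axioms (hG : G.Axioms) : (dualG G).Axioms := by
  constructor
  · exact hG.ax1
  · exact hG.ax21
  · exact hG.ax22
  · exact hG.ax23
  · exact hG.ax3
  · intro a b h hd
    rw [Set.union_comm]
    exact hG.sig_union a b h hd
  · intro a b h hd
    rw [Set.inter_comm]
    exact hG.sig_disjoint a b h hd
  · exact hG.sigM_nonempty
  · exact hG.sigY_nonempty
  · intro a b h hd x hx y hy
    exact (or_comm).trans (hG.sig_class a b h hd x hx y hy)
  · exact hG.sigM_symm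
  · exact hG.sigY_symm
  · exact hG.pl_spec
  · exact hG.pt_spec
  · intro a b p q h1 h2 h3 h4
    exact ⟨(hG.ax4 a b p q h1 h2 h3 h4).2, (hG.ax4 a b p q h1 h2 h3 h4).1⟩

lemma dual_HM : (dualG G).HM = G.HY := rfl

lemma dual_HY : (dualG G).HY = G.HM := rfl

end LineGeom

/-- Axioms [H_⊓] and [H_⋎] are equivalent. -/
theorem stmt_11 (G : LineGeom) (hG : G.Axioms) : G.HM ↔ G.HY := by
  constructor
  · intro h
    exact LineGeom.hm_to_hy hG h
  · intro h
    have h' : (LineGeom.dualG G).HM := h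
    have := LineGeom.hm_to_hy (LineGeom.dual_axioms hG) h'
    exact this
end

section
/- Assuming Axiom [H] (the diagonals of a tetrad form a triad of like type), the diagonal points of a complete quadrangle are not collinear: if O, P, Q, R are four points of a plane, no three collinear, then the points A = OP·QR, B = OQ·RP, C = OR·PQ do not lie on a common line. -/
open LineGeom

/-- Axiom [H]: the diagonals of a tetrad form a triad of like type. -/
def LineGeom.AxH (G : LineGeom) : Prop :=
  (∀ o p q r a b c : G.L, G.MTetrad o p q r →
    G.pt o p ∩ G.pt q r = {a} →
    G.pt o q ∩ G.pt r p = {b} →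
    G.pt o r ∩ G.pt p q = {c} →
    G.MTriad a b c) ∧
  (∀ o p q r a b c : G.L, G.YTetrad o p q r →
    G.pl o p ∩ G.pl q r = {a} →
    G.pl o q ∩ G.pl r p = {b} →
    G.pl o r ∩ G.pl p q = {c} →
    G.YTriad a b c)

section Aux

variable {G : LineGeom}

lemma mem_perp2 {x a b : G.L} (h1 : G.dag x a) (h2 : G.dag x b) :
    x ∈ G.perp {a, b} := by
  intro s hs
  simp only [Set.mem_insert_iff, Set.mem_singleton_iff] at hs
  rcases hs with rfl | rfl
  · exact h1
  · exact h2

lemma mem_perp3 {x a b c : G.L} (h1 : G.dag x a) (h2 : G.dag x b) (h3 : G.dag x c) :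
    x ∈ G.perp {a, b, c} := by
  intro s hs
  simp only [Set.mem_insert_iff, Set.mem_singleton_iff] at hs
  rcases hs with rfl | rfl | rfl
  · exact h1
  · exact h2
  · exact h3

lemma perp2_dag1 {x a b : G.L} (h : x ∈ G.perp {a, b}) : G.dag x a :=
  h a (Set.mem_insert _ _)

lemma perp2_dag2 {x a b : G.L} (h : x ∈ G.perp {a, b}) : G.dag x b :=
  h b (Set.mem_insert_of_mem _ rfl)

lemma perp3_dag1 {x a b c : G.L} (h : x ∈ G.perp {a, b, c}) : G.dag x a :=
  h a (Set.mem_insert _ _)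

lemma perp3_dag2 {x a b c : G.L} (h : x ∈ G.perp {a, b, c}) : G.dag x b :=
  h b (Set.mem_insert_of_mem _ (Set.mem_insert _ _))

lemma perp3_dag3 {x a b c : G.L} (h : x ∈ G.perp {a, b, c}) : G.dag x c :=
  h c (Set.mem_insert_of_mem _ (Set.mem_insert_of_mem _ rfl))

lemma sigY_sub_sig (hG : G.Axioms) {a b : G.L} (hab : a ≠ b) (hd : G.dag a b) :
    G.SigY a b ⊆ G.Sig a b := by
  rw [← hG.sig_union a b hab hd]; exact Set.subset_union_left

lemma sigM_sub_sig (hG : G.Axioms) {a b : G.L} (hab : a ≠ b) (hd : G.dag a b) :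
    G.SigM a b ⊆ G.Sig a b := by
  rw [← hG.sig_union a b hab hd]; exact Set.subset_union_right

/-- any two lines of a point are incident -/
lemma pt_pairwise (hG : G.Axioms) {a b : G.L} (hab : a ≠ b) (hd : G.dag a b)
    {u v : G.L} (hu : u ∈ G.pt a b) (hv : v ∈ G.pt a b) : G.dag u v := by
  obtain ⟨c, hc⟩ := hG.sigY_nonempty a b hab hd
  have hpt := hG.pt_spec a b hab hd c hc
  exact hG.ax22 a b hab hd c (sigY_sub_sig hG hab hd hc) u (hpt ▸ hu) v (hpt ▸ hv)

lemma left_mem_pt (hG : G.Axioms) {a b : G.L} (hab : a ≠ b) (hd : G.dag a b) :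
    a ∈ G.pt a b := by
  obtain ⟨c, hc⟩ := hG.sigY_nonempty a b hab hd
  rw [hG.pt_spec a b hab hd c hc]
  exact mem_perp3 (G.dag_refl a) hd
    (G.dag_symm (perp2_dag1 (sigY_sub_sig hG hab hd hc).1))

lemma right_mem_pt (hG : G.Axioms) {a b : G.L} (hab : a ≠ b) (hd : G.dag a b) :
    b ∈ G.pt a b := by
  obtain ⟨c, hc⟩ := hG.sigY_nonempty a b hab hd
  rw [hG.pt_spec a b hab hd c hc]
  have hcb : G.dag c b := (sigY_sub_sig hG hab hd hc).1 b (Set.mem_insert_of_mem _ rfl)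
  exact mem_perp3 (G.dag_symm hd) (G.dag_refl b) (G.dag_symm hcb)

/-- KEY: two distinct lines of a point admit a third line of the point in
their `⋎`-class. -/
lemma exists_sigY_mem (hG : G.Axioms) {a b : G.L} (hab : a ≠ b) (hd : G.dag a b)
    {u v : G.L} (hu : u ∈ G.pt a b) (hv : v ∈ G.pt a b) (huv : u ≠ v) :
    ∃ w ∈ G.pt a b, w ∈ G.SigY u v := by
  obtain ⟨c, hcY⟩ := hG.sigY_nonempty a b hab hd
  have hcS : c ∈ G.Sig a b := sigY_sub_sig hG hab hd hcY
  have hpt := hG.pt_spec a b hab hd c hcY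
  have hduv : G.dag u v := pt_pairwise hG hab hd hu hv
  by_contra hcon
  push_neg at hcon
  obtain ⟨m, hmM⟩ := hG.sigM_nonempty u v huv hduv
  have hmS : m ∈ G.Sig u v := sigM_sub_sig hG huv hduv hmM
  have hpl := hG.pl_spec u v huv hduv m hmM
  -- pt a b ⊆ pl u v
  have hXpl : G.pt a b ⊆ G.pl u v := by
    intro w hw
    have hwu : G.dag w u := pt_pairwise hG hab hd hw hu
    have hwv : G.dag w v := pt_pairwise hG hab hd hw hv
    by_cases hsig : w ∈ G.Sig u v
    · have : w ∈ G.SigY u v ∪ G.SigM u v := by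
        rw [hG.sig_union u v huv hduv]; exact hsig
      rcases this with hY | hM
      · exact absurd hY (hcon w hw)
      · rw [hG.pl_spec u v huv hduv w hM]
        exact mem_perp3 hwu hwv (G.dag_refl w)
    · have hwpp : w ∈ G.perp (G.perp {u, v}) := by
        by_contra h2; exact hsig ⟨mem_perp2 hwu hwv, h2⟩
      rw [hpl]
      exact mem_perp3 hwu hwv (hwpp m hmS.1)
  -- a, b, c ∈ pt a b
  have haX : a ∈ G.pt a b := left_mem_pt hG hab hd
  have hbX : b ∈ G.pt a b := right_mem_pt hG hab hd
  have hcX : c ∈ G.pt a b := by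
    rw [hpt]
    have hca : G.dag c a := hcS.1 a (Set.mem_insert _ _)
    have hcb : G.dag c b := hcS.1 b (Set.mem_insert_of_mem _ rfl)
    exact mem_perp3 hca hcb (G.dag_refl c)
  -- pl u v ⊆ pt a b
  have hplX : G.pl u v ⊆ G.pt a b := by
    intro w hw
    have hpw : ∀ x ∈ G.pl u v, G.dag w x := by
      intro x hx
      exact hG.ax22 u v huv hduv m hmS w (hpl ▸ hw) x (hpl ▸ hx)
    rw [hpt]
    exact mem_perp3 (hpw a (hXpl haX)) (hpw b (hXpl hbX)) (hpw c (hXpl hcX))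
  have hXeq : G.pt a b = G.pl u v := Set.Subset.antisymm hXpl hplX
  -- ax3 gives a point or plane disjoint from pt a b; ax4 says no
  obtain ⟨p, q, hpq, hdpq, r, hrS, hdisj⟩ := hG.ax3 a b hab hd c hcS
  rw [← hpt] at hdisj
  have : r ∈ G.SigY p q ∪ G.SigM p q := by
    rw [hG.sig_union p q hpq hdpq]; exact hrS
  rcases this with hrY | hrM
  · obtain ⟨z, hz1, hz2⟩ := (hG.ax4 a b p q hab hd hpq hdpq).1
    rw [hG.pt_spec p q hpq hdpq r hrY] at hz2
    have hmem : z ∈ G.pt a b ∩ G.perp {p, q, r} := ⟨hz1, hz2⟩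
    rw [hdisj] at hmem
    exact hmem.elim
  · obtain ⟨z, hz1, hz2⟩ := (hG.ax4 u v p q huv hduv hpq hdpq).2
    rw [hG.pl_spec p q hpq hdpq r hrM] at hz2
    rw [← hXeq] at hz1
    have hmem : z ∈ G.pt a b ∩ G.perp {p, q, r} := ⟨hz1, hz2⟩
    rw [hdisj] at hmem
    exact hmem.elim

/-- a point is determined by any two of its (distinct) lines -/
lemma pt_eq_pt (hG : G.Axioms) {a b : G.L} (hab : a ≠ b) (hd : G.dag a b)
    {u v : G.L} (hu : u ∈ G.pt a b) (hv : v ∈ G.pt a b) (huv : u ≠ v) :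
    G.pt a b = G.pt u v := by
  have hduv : G.dag u v := pt_pairwise hG hab hd hu hv
  obtain ⟨w, hwX, hwY⟩ := exists_sigY_mem hG hab hd hu hv huv
  have h1 : G.pt a b ⊆ G.pt u v := by
    rw [hG.pt_spec u v huv hduv w hwY]
    intro z hz
    exact mem_perp3 (pt_pairwise hG hab hd hz hu) (pt_pairwise hG hab hd hz hv)
      (pt_pairwise hG hab hd hz hwX)
  have ha' : a ∈ G.pt u v := h1 (left_mem_pt hG hab hd)
  have hb' : b ∈ G.pt u v := h1 (right_mem_pt hG hab hd)
  obtain ⟨w', hw'X, hw'Y⟩ := exists_sigY_mem hG huv hduv ha' hb' hab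
  have h2 : G.pt u v ⊆ G.pt a b := by
    rw [hG.pt_spec a b hab hd w' hw'Y]
    intro z hz
    exact mem_perp3 (pt_pairwise hG huv hduv hz ha') (pt_pairwise hG huv hduv hz hb')
      (pt_pairwise hG huv hduv hz hw'X)
  exact Set.Subset.antisymm h1 h2

lemma point_eq_pt (hG : G.Axioms) {X : Set G.L} (hX : G.IsPoint X)
    {u v : G.L} (hu : u ∈ X) (hv : v ∈ X) (huv : u ≠ v) : X = G.pt u v := by
  obtain ⟨a, b, hab, hd, rfl⟩ := hX
  exact pt_eq_pt hG hab hd hu hv huv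

lemma point_pairwise (hG : G.Axioms) {X : Set G.L} (hX : G.IsPoint X)
    {u v : G.L} (hu : u ∈ X) (hv : v ∈ X) : G.dag u v := by
  obtain ⟨a, b, hab, hd, rfl⟩ := hX
  exact pt_pairwise hG hab hd hu hv

/-- a line incident to both `u`, `v` but not through `u ⋎ v` is in the
`⊓`-class. -/
lemma mem_sigM_of_not_mem_pt (hG : G.Axioms) {u v w : G.L} (huv : u ≠ v)
    (hduv : G.dag u v) (h1 : G.dag w u) (h2 : G.dag w v)
    (hnot : w ∉ G.pt u v) : w ∈ G.SigM u v := by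
  obtain ⟨c, hcY⟩ := hG.sigY_nonempty u v huv hduv
  have hcS : c ∈ G.Sig u v := sigY_sub_sig hG huv hduv hcY
  have hpt := hG.pt_spec u v huv hduv c hcY
  have hwS : w ∈ G.Sig u v := by
    constructor
    · exact mem_perp2 h1 h2
    · intro hpp
      apply hnot
      rw [hpt]
      exact mem_perp3 h1 h2 (hpp c hcS.1)
  have : w ∈ G.SigY u v ∪ G.SigM u v := by
    rw [hG.sig_union u v huv hduv]; exact hwS
  rcases this with hY | hM
  · exfalso
    apply hnot
    rw [hG.pt_spec u v huv hduv w hY]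
    exact mem_perp3 h1 h2 (G.dag_refl w)
  · exact hM

/-- a line through the point `u ⋎ v` is never in the `⊓`-class of `u, v`. -/
lemma not_sigM_of_mem_pt (hG : G.Axioms) {u v w : G.L} (huv : u ≠ v)
    (hduv : G.dag u v) (hw : w ∈ G.pt u v) : w ∉ G.SigM u v := by
  intro hM
  obtain ⟨c, hcY⟩ := hG.sigY_nonempty u v huv hduv
  have hcS : c ∈ G.Sig u v := sigY_sub_sig hG huv hduv hcY
  have hwS : w ∈ G.Sig u v := sigM_sub_sig hG huv hduv hM
  have hdwc : G.dag w c := by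
    rw [hG.pt_spec u v huv hduv c hcY] at hw
    exact perp3_dag3 hw
  have := (hG.sig_class u v huv hduv w hwS c hcS).mpr hdwc
  rcases this with ⟨hwY, _⟩ | ⟨_, hcM⟩
  · have hmem : w ∈ G.SigY u v ∩ G.SigM u v := ⟨hwY, hM⟩
    rw [hG.sig_disjoint u v huv hduv] at hmem
    exact hmem.elim
  · have hmem : c ∈ G.SigY u v ∩ G.SigM u v := ⟨hcY, hcM⟩
    rw [hG.sig_disjoint u v huv hduv] at hmem
    exact hmem.elim

end Aux

/-- Assuming Axiom [H], the diagonal points of a complete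
quadrangle are not collinear: if `O, P, Q, R` are four points of a plane, no
three collinear, then the diagonal points `A = OP·QR`, `B = OQ·RP`,
`C = OR·PQ` do not lie on a common line. -/
theorem stmt_12 (G : LineGeom) (hG : G.Axioms) (hH : G.AxH)
    (O P Q R A B C : Set G.L) (ζ : Set G.L)
    (hO : G.IsPoint O) (hP : G.IsPoint P) (hQ : G.IsPoint Q) (hR : G.IsPoint R)
    (hdist : O ≠ P ∧ O ≠ Q ∧ O ≠ R ∧ P ≠ Q ∧ P ≠ R ∧ Q ≠ R)
    (hζ : G.IsPlane ζ)
    (hOζ : (O ∩ ζ).Nonempty) (hPζ : (P ∩ ζ).Nonempty)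
    (hQζ : (Q ∩ ζ).Nonempty) (hRζ : (R ∩ ζ).Nonempty)
    (hnc : ∀ X Y W : Set G.L, ({X, Y, W} : Set (Set G.L)) ⊆ {O, P, Q, R} →
      X ≠ Y → Y ≠ W → X ≠ W → ¬ ∃ l : G.L, l ∈ X ∧ l ∈ Y ∧ l ∈ W)
    (lOP lQR lOQ lRP lOR lPQ : G.L)
    (hOP : O ∩ P = {lOP}) (hQR : Q ∩ R = {lQR})
    (hOQ : O ∩ Q = {lOQ}) (hRP : R ∩ P = {lRP})
    (hOR : O ∩ R = {lOR}) (hPQ : P ∩ Q = {lPQ})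
    (hA : G.IsPoint A) (hA1 : lOP ∈ A) (hA2 : lQR ∈ A)
    (hB : G.IsPoint B) (hB1 : lOQ ∈ B) (hB2 : lRP ∈ B)
    (hC : G.IsPoint C) (hC1 : lOR ∈ C) (hC2 : lPQ ∈ C) :
    ¬ ∃ l : G.L, l ∈ A ∧ l ∈ B ∧ l ∈ C := by
  rintro ⟨l, hlA, hlB, hlC⟩
  obtain ⟨neOP, neOQ, neOR, nePQ, nePR, neQR⟩ := hdist
  -- side-line memberships
  have hOPm : lOP ∈ O ∩ P := by rw [hOP]; rfl
  have hQRm : lQR ∈ Q ∩ R := by rw [hQR]; rfl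
  have hOQm : lOQ ∈ O ∩ Q := by rw [hOQ]; rfl
  have hRPm : lRP ∈ R ∩ P := by rw [hRP]; rfl
  have hORm : lOR ∈ O ∩ R := by rw [hOR]; rfl
  have hPQm : lPQ ∈ P ∩ Q := by rw [hPQ]; rfl
  obtain ⟨hOPo, hOPp⟩ := hOPm
  obtain ⟨hQRq, hQRr⟩ := hQRm
  obtain ⟨hOQo, hOQq⟩ := hOQm
  obtain ⟨hRPr, hRPp⟩ := hRPm
  obtain ⟨hORo, hORr⟩ := hORm
  obtain ⟨hPQp, hPQq⟩ := hPQm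
  -- no-collinearity instances
  have sub4 : ∀ X Y W : Set G.L, X ∈ ({O, P, Q, R} : Set (Set G.L)) →
      Y ∈ ({O, P, Q, R} : Set (Set G.L)) → W ∈ ({O, P, Q, R} : Set (Set G.L)) →
      ({X, Y, W} : Set (Set G.L)) ⊆ {O, P, Q, R} := by
    intro X Y W h1 h2 h3 Z hZ
    simp only [Set.mem_insert_iff, Set.mem_singleton_iff] at hZ
    rcases hZ with rfl | rfl | rfl <;> assumption
  have mO : O ∈ ({O, P, Q, R} : Set (Set G.L)) := by simp
  have mP : P ∈ ({O, P, Q, R} : Set (Set G.L)) := by simp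
  have mQ : Q ∈ ({O, P, Q, R} : Set (Set G.L)) := by simp
  have mR : R ∈ ({O, P, Q, R} : Set (Set G.L)) := by simp
  have ncOPQ : ¬ ∃ x, x ∈ O ∧ x ∈ P ∧ x ∈ Q := hnc O P Q (sub4 O P Q mO mP mQ) neOP nePQ neOQ
  have ncOPR : ¬ ∃ x, x ∈ O ∧ x ∈ P ∧ x ∈ R := hnc O P R (sub4 O P R mO mP mR) neOP nePR neOR
  have ncOQR : ¬ ∃ x, x ∈ O ∧ x ∈ Q ∧ x ∈ R := hnc O Q R (sub4 O Q R mO mQ mR) neOQ neQR neOR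
  have ncPQR : ¬ ∃ x, x ∈ P ∧ x ∈ Q ∧ x ∈ R := hnc P Q R (sub4 P Q R mP mQ mR) nePQ neQR nePR
  -- distinctness of side-lines
  have neOPQR : lOP ≠ lQR := fun h => ncOPQ ⟨lOP, hOPo, hOPp, h ▸ hQRq⟩
  have neOPOQ : lOP ≠ lOQ := fun h => ncOPQ ⟨lOP, hOPo, hOPp, h ▸ hOQq⟩
  have neOPRP : lOP ≠ lRP := fun h => ncOPR ⟨lOP, hOPo, hOPp, h ▸ hRPr⟩
  have neQROQ : lQR ≠ lOQ := fun h => ncOQR ⟨lQR, h ▸ hOQo, hQRq, hQRr⟩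
  have neQRRP : lQR ≠ lRP := fun h => ncPQR ⟨lQR, h ▸ hRPp, hQRq, hQRr⟩
  have neOQRP : lOQ ≠ lRP := fun h => ncOQR ⟨lOQ, hOQo, hOQq, h ▸ hRPr⟩
  have neORPQ : lOR ≠ lPQ := fun h => ncOPR ⟨lOR, hORo, h ▸ hPQp, hORr⟩
  -- incidences
  have dOPQR : G.dag lOP lQR := point_pairwise hG hA hA1 hA2
  have dOPOQ : G.dag lOP lOQ := point_pairwise hG hO hOPo hOQo
  have dOPRP : G.dag lOP lRP := point_pairwise hG hP hOPp hRPp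
  have dQROQ : G.dag lQR lOQ := point_pairwise hG hQ hQRq hOQq
  have dQRRP : G.dag lQR lRP := point_pairwise hG hR hQRr hRPr
  have dOQRP : G.dag lOQ lRP := point_pairwise hG hB hB1 hB2
  have dORPQ : G.dag lOR lPQ := point_pairwise hG hC hC1 hC2
  -- identification of points as pt of two of their lines
  have eA : A = G.pt lOP lQR := point_eq_pt hG hA hA1 hA2 neOPQR
  have eB : B = G.pt lOQ lRP := point_eq_pt hG hB hB1 hB2 neOQRP
  have eC : C = G.pt lOR lPQ := point_eq_pt hG hC hC1 hC2 neORPQ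
  have eO1 : O = G.pt lOP lOQ := point_eq_pt hG hO hOPo hOQo neOPOQ
  have eO2 : O = G.pt lOQ lOP := point_eq_pt hG hO hOQo hOPo neOPOQ.symm
  have eP1 : P = G.pt lOP lRP := point_eq_pt hG hP hOPp hRPp neOPRP
  have eP2 : P = G.pt lRP lOP := point_eq_pt hG hP hRPp hOPp neOPRP.symm
  have eQ1 : Q = G.pt lQR lOQ := point_eq_pt hG hQ hQRq hOQq neQROQ
  have eQ2 : Q = G.pt lOQ lQR := point_eq_pt hG hQ hOQq hQRq neQROQ.symm
  have eR1 : R = G.pt lRP lQR := point_eq_pt hG hR hRPr hQRr neQRRP.symm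
  have eR2 : R = G.pt lQR lRP := point_eq_pt hG hR hQRr hRPr neQRRP
  have eA2 : A = G.pt lQR lOP := point_eq_pt hG hA hA2 hA1 neOPQR.symm
  -- non-membership facts (simple)
  have nOQR : lOQ ∉ R := fun h => ncOQR ⟨lOQ, hOQo, hOQq, h⟩
  have nRPQ : lRP ∉ Q := fun h => ncPQR ⟨lRP, hRPp, h, hRPr⟩
  have nOQP : lOQ ∉ P := fun h => ncOPQ ⟨lOQ, hOQo, h, hOQq⟩
  have nRPO : lRP ∉ O := fun h => ncOPR ⟨lRP, h, hRPp, hRPr⟩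
  have nOPR : lOP ∉ R := fun h => ncOPR ⟨lOP, hOPo, hOPp, h⟩
  have nQRP : lQR ∉ P := fun h => ncPQR ⟨lQR, h, hQRq, hQRr⟩
  have nOPQ : lOP ∉ Q := fun h => ncOPQ ⟨lOP, hOPo, hOPp, h⟩
  have nQRO : lQR ∉ O := fun h => ncOQR ⟨lQR, h, hQRq, hQRr⟩
  -- non-membership facts (via diagonal points)
  have nQRB : lQR ∉ B := by
    intro h
    have hBQ : B = Q := (point_eq_pt hG hB h hB1 neQROQ).trans eQ1.symm
    exact nRPQ (hBQ ▸ hB2)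
  have nOPB : lOP ∉ B := by
    intro h
    have hBO : B = O := (point_eq_pt hG hB h hB1 neOPOQ).trans eO1.symm
    exact nRPO (hBO ▸ hB2)
  have nRPA : lRP ∉ A := by
    intro h
    have hAR : A = R := (point_eq_pt hG hA h hA2 neQRRP.symm).trans eR1.symm
    exact nOPR (hAR ▸ hA1)
  have nOQA : lOQ ∉ A := by
    intro h
    have hAO : A = O := (point_eq_pt hG hA h hA1 neOPOQ.symm).trans eO2.symm
    exact nQRO (hAO ▸ hA2)
  -- SigM memberships for the tetrad (o,p,q,r) = (lOP, lQR, lOQ, lRP)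
  have sQR_OQRP : lQR ∈ G.SigM lOQ lRP :=
    mem_sigM_of_not_mem_pt hG neOQRP dOQRP dQROQ dQRRP (fun h => nQRB (eB ▸ h))
  have sOQ_RPQR : lOQ ∈ G.SigM lRP lQR :=
    mem_sigM_of_not_mem_pt hG neQRRP.symm (G.dag_symm dQRRP) dOQRP
      (G.dag_symm dQROQ) (fun h => nOQR (eR1 ▸ h))
  have sRP_QROQ : lRP ∈ G.SigM lQR lOQ :=
    mem_sigM_of_not_mem_pt hG neQROQ dQROQ (G.dag_symm dQRRP) (G.dag_symm dOQRP) (fun h => nRPQ (eQ1 ▸ h))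
  have sOP_OQRP : lOP ∈ G.SigM lOQ lRP :=
    mem_sigM_of_not_mem_pt hG neOQRP dOQRP dOPOQ dOPRP (fun h => nOPB (eB ▸ h))
  have sOQ_RPOP : lOQ ∈ G.SigM lRP lOP :=
    mem_sigM_of_not_mem_pt hG neOPRP.symm (G.dag_symm dOPRP) dOQRP
      (G.dag_symm dOPOQ) (fun h => nOQP (eP2 ▸ h))
  have sRP_OPOQ : lRP ∈ G.SigM lOP lOQ :=
    mem_sigM_of_not_mem_pt hG neOPOQ dOPOQ (G.dag_symm dOPRP) (G.dag_symm dOQRP)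
      (fun h => nRPO (eO1 ▸ h))
  have sOP_RPQR : lOP ∈ G.SigM lRP lQR :=
    mem_sigM_of_not_mem_pt hG neQRRP.symm (G.dag_symm dQRRP) dOPRP dOPQR
      (fun h => nOPR (eR1 ▸ h))
  have sRP_QROP : lRP ∈ G.SigM lQR lOP :=
    mem_sigM_of_not_mem_pt hG neOPQR.symm (G.dag_symm dOPQR) (G.dag_symm dQRRP)
      (G.dag_symm dOPRP) (fun h => nRPA (eA2 ▸ h))
  have sQR_OPRP : lQR ∈ G.SigM lOP lRP :=
    mem_sigM_of_not_mem_pt hG neOPRP dOPRP (G.dag_symm dOPQR) dQRRP (fun h => nQRP (eP1 ▸ h))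
  have sOP_QROQ : lOP ∈ G.SigM lQR lOQ :=
    mem_sigM_of_not_mem_pt hG neQROQ dQROQ dOPQR dOPOQ (fun h => nOPQ (eQ1 ▸ h))
  have sQR_OQOP : lQR ∈ G.SigM lOQ lOP :=
    mem_sigM_of_not_mem_pt hG neOPOQ.symm (G.dag_symm dOPOQ) dQROQ
      (G.dag_symm dOPQR) (fun h => nQRO (eO2 ▸ h))
  have sOQ_OPQR : lOQ ∈ G.SigM lOP lQR :=
    mem_sigM_of_not_mem_pt hG neOPQR dOPQR (G.dag_symm dOPOQ) (G.dag_symm dQROQ)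
      (fun h => nOQA (eA ▸ h))
  -- the tetrad
  have htet : G.MTetrad lOP lQR lOQ lRP := by
    refine ⟨⟨neQROQ, neOQRP, neQRRP, dQROQ, dOQRP, dQRRP, sQR_OQRP, sOQ_RPQR, sRP_QROQ⟩,
      ⟨neOPOQ, neOQRP, neOPRP, dOPOQ, dOQRP, dOPRP, sOP_OQRP, sOQ_RPOP, sRP_OPOQ⟩,
      ⟨neOPRP, neQRRP.symm, neOPQR, dOPRP, G.dag_symm dQRRP, dOPQR,
        sOP_RPQR, sRP_QROP, sQR_OPRP⟩,
      ⟨neOPQR, neQROQ, neOPOQ, dOPQR, dQROQ, dOPOQ, sOP_QROQ, sQR_OQOP, sOQ_OPQR⟩⟩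
  -- A ≠ B, hence A ∩ B = {l}
  have hAB : A ≠ B := by
    intro h
    have : lOQ ∈ A := h ▸ hB1
    exact nOQA this
  have sAB : A ∩ B = {l} := by
    ext x
    simp only [Set.mem_inter_iff, Set.mem_singleton_iff]
    constructor
    · rintro ⟨hxA, hxB⟩
      by_contra hxl
      have h1 : A = G.pt x l := point_eq_pt hG hA hxA hlA hxl
      have h2 : B = G.pt x l := point_eq_pt hG hB hxB hlB hxl
      exact hAB (h1.trans h2.symm)
    · rintro rfl
      exact ⟨hlA, hlB⟩
  have hsing1 : G.pt lOP lQR ∩ G.pt lOQ lRP = {l} := by rw [← eA, ← eB]; exact sAB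
  have hsing2 : G.pt lOP lOQ ∩ G.pt lRP lQR = {lOR} := by rw [← eO1, ← eR1]; exact hOR
  have hsing3 : G.pt lOP lRP ∩ G.pt lQR lOQ = {lPQ} := by rw [← eP1, ← eQ1]; exact hPQ
  have htriad : G.MTriad l lOR lPQ :=
    hH.1 lOP lQR lOQ lRP l lOR lPQ htet hsing1 hsing2 hsing3
  exact not_sigM_of_mem_pt hG neORPQ dORPQ (eC ▸ hlC) htriad.2.2.2.2.2.2.1
end

section
/- If o, p, q, r is a ⊓-tetrad, then for any three of its lines x, y, z one has z ∈ Σ_⊓(x,y); in particular all six planes x ⊓ y (for pairs from o, p, q, r) coincide, and no three of the four lines are copunctal. -/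
open LineGeom

/-- In a `⊓`-tetrad, any third line lies in `Σ_⊓` of the other
two; all six planes determined by pairs coincide; and no three of the four
lines are copunctal. -/
theorem stmt_18 (G : LineGeom) (hG : G.Axioms) (o p q r : G.L)
    (hT : G.MTetrad o p q r) :
    (∀ x y z : G.L, ({x, y, z} : Set G.L) ⊆ {o, p, q, r} →
      x ≠ y → y ≠ z → x ≠ z → z ∈ G.SigM x y) ∧
    (G.pl o p = G.pl o q ∧ G.pl o q = G.pl o r ∧ G.pl o r = G.pl q r ∧
     G.pl q r = G.pl r p ∧ G.pl r p = G.pl p q) ∧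
    (∀ x y z : G.L, ({x, y, z} : Set G.L) ⊆ {o, p, q, r} →
      x ≠ y → y ≠ z → x ≠ z →
      ¬ ∃ u v : G.L, u ≠ v ∧ G.dag u v ∧
        x ∈ G.pt u v ∧ y ∈ G.pt u v ∧ z ∈ G.pt u v) := by

  obtain ⟨⟨hpq, hqr, hpr, dpq, dqr, dpr, m1, m2, m3⟩,
          ⟨hoq, hqr2, hor, doq, dqr2, dor, m4, m5, m6⟩,
          ⟨hor2, hrp, hop2, dor2, drp, dop2, m7, m8, m9⟩,
          ⟨hop, hpq2, hoq2, dop, dpq2, doq2, m10, m11, m12⟩⟩ := hT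
  have m1' : p ∈ G.SigM r q := hG.sigM_symm q r ▸ m1
  have m2' : q ∈ G.SigM p r := hG.sigM_symm r p ▸ m2
  have m3' : r ∈ G.SigM q p := hG.sigM_symm p q ▸ m3
  have m4' : o ∈ G.SigM r q := hG.sigM_symm q r ▸ m4
  have m5' : q ∈ G.SigM o r := hG.sigM_symm r o ▸ m5
  have m6' : r ∈ G.SigM q o := hG.sigM_symm o q ▸ m6
  have m7' : o ∈ G.SigM p r := hG.sigM_symm r p ▸ m7
  have m8' : r ∈ G.SigM o p := hG.sigM_symm p o ▸ m8
  have m9' : p ∈ G.SigM r o := hG.sigM_symm o r ▸ m9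
  have m10' : o ∈ G.SigM q p := hG.sigM_symm p q ▸ m10
  have m11' : p ∈ G.SigM o q := hG.sigM_symm q o ▸ m11
  have m12' : q ∈ G.SigM p o := hG.sigM_symm o p ▸ m12
  have dpq' := G.dag_symm dpq
  have dqr' := G.dag_symm dqr
  have dpr' := G.dag_symm dpr
  have doq' := G.dag_symm doq
  have dor' := G.dag_symm dor
  have dop' := G.dag_symm dop
  have key : ∀ x y z : G.L, ({x, y, z} : Set G.L) ⊆ {o, p, q, r} →
      x ≠ y → y ≠ z → x ≠ z → z ∈ G.SigM x y := by
    intro x y z hsub hxy hyz hxz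
    have hx := hsub (by simp : x ∈ ({x, y, z} : Set G.L))
    have hy := hsub (by simp : y ∈ ({x, y, z} : Set G.L))
    have hz := hsub (by simp : z ∈ ({x, y, z} : Set G.L))
    simp only [Set.mem_insert_iff, Set.mem_singleton_iff] at hx hy hz
    rcases hx with rfl | rfl | rfl | rfl <;>
      rcases hy with rfl | rfl | rfl | rfl <;>
      rcases hz with rfl | rfl | rfl | rfl <;>
      first
        | exact absurd rfl hxy
        | exact absurd rfl hyz
        | exact absurd rfl hxz
        | assumption
  have hdag : ∀ x y : G.L, x ∈ ({o, p, q, r} : Set G.L) →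
      y ∈ ({o, p, q, r} : Set G.L) → G.dag x y := by
    intro x y hx hy
    simp only [Set.mem_insert_iff, Set.mem_singleton_iff] at hx hy
    rcases hx with rfl | rfl | rfl | rfl <;>
      rcases hy with rfl | rfl | rfl | rfl <;>
      first
        | exact G.dag_refl _
        | assumption
  have hset : ∀ a b c a' b' c' : G.L, ({a, b, c} : Set G.L) = {a', b', c'} →
      G.perp {a, b, c} = G.perp {a', b', c'} := by
    intro a b c a' b' c' h
    rw [h]
  refine ⟨key, ⟨?_, ?_, ?_, ?_, ?_⟩, ?_⟩
  · rw [hG.pl_spec o p hop dop q m12, hG.pl_spec o q hoq doq p m11']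
    exact hset _ _ _ _ _ _ (by ext w; simp; tauto)
  · rw [hG.pl_spec o q hoq doq r m6, hG.pl_spec o r hor dor q m5']
    exact hset _ _ _ _ _ _ (by ext w; simp; tauto)
  · rw [hG.pl_spec o r hor dor q m5', hG.pl_spec q r hqr dqr o m4]
    exact hset _ _ _ _ _ _ (by ext w; simp; tauto)
  · rw [hG.pl_spec q r hqr dqr p m1, hG.pl_spec r p hrp drp q m2]
    exact hset _ _ _ _ _ _ (by ext w; simp; tauto)
  · rw [hG.pl_spec r p hrp drp q m2, hG.pl_spec p q hpq dpq r m3]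
    exact hset _ _ _ _ _ _ (by ext w; simp; tauto)
  · rintro x y z hsub hxy hyz hxz ⟨u, v, huv, hduv, hxu, hyu, hzu⟩
    have hxS : x ∈ ({o, p, q, r} : Set G.L) := hsub (by simp)
    have hyS : y ∈ ({o, p, q, r} : Set G.L) := hsub (by simp)
    have hzS : z ∈ ({o, p, q, r} : Set G.L) := hsub (by simp)
    have hdxy : G.dag x y := hdag x y hxS hyS
    have hzM : z ∈ G.SigM x y := key x y z hsub hxy hyz hxz
    have hzSig : z ∈ G.Sig x y :=
      hG.sig_union x y hxy hdxy ▸ Set.mem_union_right _ hzM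
    obtain ⟨c, hc⟩ := hG.sigY_nonempty u v huv hduv
    have hptv : G.pt u v = G.perp {u, v, c} := hG.pt_spec u v huv hduv c hc
    have hcSig : c ∈ G.Sig u v :=
      hG.sig_union u v huv hduv ▸ Set.mem_union_left _ hc
    have h22 := hG.ax22 u v huv hduv c hcSig
    have hx' : x ∈ G.perp {u, v, c} := hptv ▸ hxu
    have hy' : y ∈ G.perp {u, v, c} := hptv ▸ hyu
    have hz' : z ∈ G.perp {u, v, c} := hptv ▸ hzu
    have hsubP : G.pt u v ⊆ G.perp {x, y, z} := by
      intro w hw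
      have hw' : w ∈ G.perp {u, v, c} := hptv ▸ hw
      intro s hs
      simp only [Set.mem_insert_iff, Set.mem_singleton_iff] at hs
      rcases hs with rfl | rfl | rfl
      · exact h22 w hw' s hx'
      · exact h22 w hw' s hy'
      · exact h22 w hw' s hz'
    obtain ⟨p', q', hne', hd', r', hr'Sig, hempty⟩ :=
      hG.ax3 x y hxy hdxy z hzSig
    rw [← hG.sig_union p' q' hne' hd'] at hr'Sig
    rcases hr'Sig with hY | hM
    · have hpt' : G.pt p' q' = G.perp {p', q', r'} :=
        hG.pt_spec p' q' hne' hd' r' hY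
      obtain ⟨w, hw1, hw2⟩ := (hG.ax4 u v p' q' huv hduv hne' hd').1
      have hmem : w ∈ G.perp {x, y, z} ∩ G.perp {p', q', r'} :=
        ⟨hsubP hw1, hpt' ▸ hw2⟩
      exact Set.notMem_empty w (hempty ▸ hmem)
    · have hplxy : G.pl x y = G.perp {x, y, z} := hG.pl_spec x y hxy hdxy z hzM
      have hpl' : G.pl p' q' = G.perp {p', q', r'} :=
        hG.pl_spec p' q' hne' hd' r' hM
      obtain ⟨w, hw1, hw2⟩ := (hG.ax4 x y p' q' hxy hdxy hne' hd').2
      have hmem : w ∈ G.perp {x, y, z} ∩ G.perp {p', q', r'} :=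
        ⟨hplxy ▸ hw1, hpl' ▸ hw2⟩
      exact Set.notMem_empty w (hempty ▸ hmem)
end
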